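/- arXiv:0912.4747 — 6 statements merged into one kernel-verified Lean document; each statement's English description precedes it below -/
import Mathlib

section
/- The number of Dyck paths of semilength n that start with at least k upsteps, end with at least p downsteps, and touch the x-axis at least once strictly between the endpoints equals ((k+p+1)/(n+1)) * C(2n-k-p, n), for k,p ≥ 1 and n ≥ k+p. -/
/-- Number of upsteps among the first `t` steps of the path `f`. -/
def upCount {m : ℕ} (f : Fin m → Bool) (t : ℕ) : ℕ :=
  (Finset.univ.filter (fun i : Fin m => (i : ℕ) < t ∧ f i = true)).card

/-- Number of downsteps among the first `t` steps of the path `f`. -/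
def downCount {m : ℕ} (f : Fin m → Bool) (t : ℕ) : ℕ :=
  (Finset.univ.filter (fun i : Fin m => (i : ℕ) < t ∧ f i = false)).card

/-- `f` encodes a Dyck path: never below the x-axis, ends on the x-axis. -/
def IsDyckPath {m : ℕ} (f : Fin m → Bool) : Prop :=
  (∀ t ≤ m, downCount f t ≤ upCount f t) ∧ upCount f m = downCount f m


lemma upCount_zero {m : ℕ} (f : Fin m → Bool) : upCount f 0 = 0 := by
  simp [upCount]

lemma downCount_zero {m : ℕ} (f : Fin m → Bool) : downCount f 0 = 0 := by
  simp [downCount]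

lemma upCount_succ {m : ℕ} (f : Fin m → Bool) {t : ℕ} (ht : t < m) :
    upCount f (t + 1) = upCount f t + (if f ⟨t, ht⟩ = true then 1 else 0) := by
  classical
  have hsplit : (Finset.univ.filter (fun i : Fin m => (i : ℕ) < t + 1 ∧ f i = true))
      = (Finset.univ.filter (fun i : Fin m => (i : ℕ) < t ∧ f i = true)) ∪
        (Finset.univ.filter (fun i : Fin m => i = ⟨t, ht⟩ ∧ f i = true)) := by
    ext i
    simp only [Finset.mem_filter, Finset.mem_union, Finset.mem_univ, true_and]
    constructor
    · rintro ⟨h1, h2⟩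
      rcases Nat.lt_succ_iff_lt_or_eq.1 h1 with h | h
      · exact Or.inl ⟨h, h2⟩
      · exact Or.inr ⟨Fin.ext h, h2⟩
    · rintro (⟨h1, h2⟩ | ⟨h1, h2⟩)
      · exact ⟨Nat.lt_succ_of_lt h1, h2⟩
      · subst h1; exact ⟨Nat.lt_succ_self t, h2⟩
  have hdisj : Disjoint (Finset.univ.filter (fun i : Fin m => (i : ℕ) < t ∧ f i = true))
      (Finset.univ.filter (fun i : Fin m => i = ⟨t, ht⟩ ∧ f i = true)) := by
    rw [Finset.disjoint_left]
    intro i hi hj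
    simp only [Finset.mem_filter, Finset.mem_univ, true_and] at hi hj
    have := hj.1; subst this; exact absurd hi.1 (lt_irrefl t)
  have hlast : (Finset.univ.filter (fun i : Fin m => i = ⟨t, ht⟩ ∧ f i = true)).card
      = if f ⟨t, ht⟩ = true then 1 else 0 := by
    by_cases h : f ⟨t, ht⟩ = true
    · rw [if_pos h]
      have : (Finset.univ.filter (fun i : Fin m => i = ⟨t, ht⟩ ∧ f i = true)) = {⟨t, ht⟩} := by
        ext i; simp only [Finset.mem_filter, Finset.mem_univ, true_and, Finset.mem_singleton]
        constructor
        · rintro ⟨h1, -⟩; exact h1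
        · rintro rfl; exact ⟨rfl, h⟩
      rw [this, Finset.card_singleton]
    · rw [if_neg h]
      have : (Finset.univ.filter (fun i : Fin m => i = ⟨t, ht⟩ ∧ f i = true)) = ∅ := by
        ext i; simp only [Finset.mem_filter, Finset.mem_univ, true_and, Finset.notMem_empty,
          iff_false, not_and]
        rintro rfl; exact h
      rw [this, Finset.card_empty]
  rw [upCount, upCount, hsplit, Finset.card_union_of_disjoint hdisj, hlast]

lemma downCount_succ {m : ℕ} (f : Fin m → Bool) {t : ℕ} (ht : t < m) :
    downCount f (t + 1) = downCount f t + (if f ⟨t, ht⟩ = false then 1 else 0) := by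
  classical
  have hsplit : (Finset.univ.filter (fun i : Fin m => (i : ℕ) < t + 1 ∧ f i = false))
      = (Finset.univ.filter (fun i : Fin m => (i : ℕ) < t ∧ f i = false)) ∪
        (Finset.univ.filter (fun i : Fin m => i = ⟨t, ht⟩ ∧ f i = false)) := by
    ext i
    simp only [Finset.mem_filter, Finset.mem_union, Finset.mem_univ, true_and]
    constructor
    · rintro ⟨h1, h2⟩
      rcases Nat.lt_succ_iff_lt_or_eq.1 h1 with h | h
      · exact Or.inl ⟨h, h2⟩
      · exact Or.inr ⟨Fin.ext h, h2⟩
    · rintro (⟨h1, h2⟩ | ⟨h1, h2⟩)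
      · exact ⟨Nat.lt_succ_of_lt h1, h2⟩
      · subst h1; exact ⟨Nat.lt_succ_self t, h2⟩
  have hdisj : Disjoint (Finset.univ.filter (fun i : Fin m => (i : ℕ) < t ∧ f i = false))
      (Finset.univ.filter (fun i : Fin m => i = ⟨t, ht⟩ ∧ f i = false)) := by
    rw [Finset.disjoint_left]
    intro i hi hj
    simp only [Finset.mem_filter, Finset.mem_univ, true_and] at hi hj
    have := hj.1; subst this; exact absurd hi.1 (lt_irrefl t)
  have hlast : (Finset.univ.filter (fun i : Fin m => i = ⟨t, ht⟩ ∧ f i = false)).card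
      = if f ⟨t, ht⟩ = false then 1 else 0 := by
    by_cases h : f ⟨t, ht⟩ = false
    · rw [if_pos h]
      have : (Finset.univ.filter (fun i : Fin m => i = ⟨t, ht⟩ ∧ f i = false)) = {⟨t, ht⟩} := by
        ext i; simp only [Finset.mem_filter, Finset.mem_univ, true_and, Finset.mem_singleton]
        constructor
        · rintro ⟨h1, -⟩; exact h1
        · rintro rfl; exact ⟨rfl, h⟩
      rw [this, Finset.card_singleton]
    · rw [if_neg h]
      have : (Finset.univ.filter (fun i : Fin m => i = ⟨t, ht⟩ ∧ f i = false)) = ∅ := by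
        ext i; simp only [Finset.mem_filter, Finset.mem_univ, true_and, Finset.notMem_empty,
          iff_false, not_and]
        rintro rfl; exact h
      rw [this, Finset.card_empty]
  rw [downCount, downCount, hsplit, Finset.card_union_of_disjoint hdisj, hlast]

lemma step_facts {m : ℕ} (f : Fin m → Bool) {t : ℕ} (ht : t < m) :
    upCount f (t+1) + downCount f (t+1) = upCount f t + downCount f t + 1 ∧
    upCount f t ≤ upCount f (t+1) ∧ downCount f t ≤ downCount f (t+1) ∧
    upCount f (t+1) ≤ upCount f t + 1 ∧ downCount f (t+1) ≤ downCount f t + 1 := by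
  rw [upCount_succ f ht, downCount_succ f ht]
  cases h : f ⟨t, ht⟩ <;> simp <;> omega

lemma count_stable {m : ℕ} (f : Fin m → Bool) {t : ℕ} (ht : m ≤ t) :
    upCount f t = upCount f m ∧ downCount f t = downCount f m := by
  constructor
  · rw [upCount, upCount]
    congr 1
    apply Finset.filter_congr
    intro i _
    have hi := i.isLt
    constructor
    · rintro ⟨-, h2⟩; exact ⟨hi, h2⟩
    · rintro ⟨-, h2⟩; exact ⟨by omega, h2⟩
  · rw [downCount, downCount]
    congr 1
    apply Finset.filter_congr
    intro i _
    have hi := i.isLt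
    constructor
    · rintro ⟨-, h2⟩; exact ⟨hi, h2⟩
    · rintro ⟨-, h2⟩; exact ⟨by omega, h2⟩

lemma count_sum {m : ℕ} (f : Fin m → Bool) : ∀ t, t ≤ m → upCount f t + downCount f t = t := by
  intro t
  induction t with
  | zero => intro _; rw [upCount_zero, downCount_zero]
  | succ t ih =>
    intro ht
    have h1 := step_facts f (show t < m by omega)
    have h2 := ih (by omega)
    omega

lemma count_congr {m : ℕ} {f f' : Fin m → Bool} {s : ℕ} (h : ∀ i : Fin m, (i : ℕ) < s → f i = f' i) :
    upCount f s = upCount f' s ∧ downCount f s = downCount f' s := by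
  constructor <;> [rw [upCount, upCount]; rw [downCount, downCount]] <;>
  · congr 1
    apply Finset.filter_congr
    intro i _
    constructor
    · rintro ⟨h1, h2⟩; exact ⟨h1, (h i h1) ▸ h2⟩
    · rintro ⟨h1, h2⟩; exact ⟨h1, (h i h1).symm ▸ h2⟩

lemma count_mono {m : ℕ} (f : Fin m → Bool) {s t : ℕ} (h : s ≤ t) :
    upCount f s ≤ upCount f t ∧ downCount f s ≤ downCount f t := by
  constructor <;> [rw [upCount, upCount]; rw [downCount, downCount]] <;>
  · apply Finset.card_le_card
    intro i hi
    simp only [Finset.mem_filter, Finset.mem_univ, true_and] at hi ⊢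
    exact ⟨lt_of_lt_of_le hi.1 h, hi.2⟩

lemma upCount_total {m : ℕ} (f : Fin m → Bool) :
    upCount f m = (Finset.univ.filter (fun i : Fin m => f i = true)).card := by
  rw [upCount]
  congr 1
  apply Finset.filter_congr
  intro i _
  simp [i.isLt]

lemma downCount_total {m : ℕ} (f : Fin m → Bool) :
    downCount f m = (Finset.univ.filter (fun i : Fin m => f i = false)).card := by
  rw [downCount]
  congr 1
  apply Finset.filter_congr
  intro i _
  simp [i.isLt]

lemma card_trueCount (m u : ℕ) :
    {g : Fin m → Bool | upCount g m = u}.ncard = Nat.choose m u := by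
  classical
  rw [← Nat.card_coe_set_eq]
  have e : {g : Fin m → Bool | upCount g m = u} ≃ {s : Finset (Fin m) // s.card = u} := by
    refine
      { toFun := fun g => ⟨Finset.univ.filter (fun i => g.1 i = true), ?_⟩
        invFun := fun s => ⟨fun i => decide (i ∈ s.1), ?_⟩
        left_inv := ?_, right_inv := ?_ }
    · have hg := g.2
      simp only [Set.mem_setOf_eq] at hg
      rw [← upCount_total]; exact hg
    · simp only [Set.mem_setOf_eq, upCount_total]
      have hset : Finset.univ.filter (fun i : Fin m => decide (i ∈ s.1) = true) = s.1 := by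
        ext i; simp
      rw [hset, s.2]
    · rintro ⟨g, hg⟩
      ext i
      simp
    · rintro ⟨s, hs⟩
      ext i
      simp
  rw [Nat.card_congr e, Nat.card_eq_fintype_card, Fintype.card_finset_len, Fintype.card_fin]

lemma card_falseCount (m r : ℕ) :
    {g : Fin m → Bool | downCount g m = r}.ncard = Nat.choose m r := by
  classical
  rw [← Nat.card_coe_set_eq]
  have e : {g : Fin m → Bool | downCount g m = r} ≃ {s : Finset (Fin m) // s.card = r} := by
    refine
      { toFun := fun g => ⟨Finset.univ.filter (fun i => g.1 i = false), ?_⟩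
        invFun := fun s => ⟨fun i => decide (i ∉ s.1), ?_⟩
        left_inv := ?_, right_inv := ?_ }
    · have hg := g.2
      simp only [Set.mem_setOf_eq] at hg
      rw [← downCount_total]; exact hg
    · simp only [Set.mem_setOf_eq, downCount_total]
      have hset : Finset.univ.filter (fun i : Fin m => decide (i ∉ s.1) = false) = s.1 := by
        ext i; simp
      rw [hset, s.2]
    · rintro ⟨g, hg⟩
      ext i
      simp
    · rintro ⟨s, hs⟩
      ext i
      simp
  rw [Nat.card_congr e, Nat.card_eq_fintype_card, Fintype.card_finset_len, Fintype.card_fin]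

/-- discrete IVT: if the walk reaches deficit ≥ c at time t, it exactly hits c at some s ≤ t. -/
lemma exists_hit {m : ℕ} (g : Fin m → Bool) (c : ℕ) :
    ∀ t, t ≤ m → upCount g t + c ≤ downCount g t →
      ∃ s, s ≤ t ∧ downCount g s = upCount g s + c := by
  intro t
  induction t with
  | zero =>
    intro _ h
    rw [upCount_zero, downCount_zero] at h
    exact ⟨0, le_refl 0, by rw [upCount_zero, downCount_zero]; omega⟩
  | succ t ih =>
    intro ht h
    by_cases hc : upCount g t + c ≤ downCount g t
    · obtain ⟨s, hs1, hs2⟩ := ih (by omega) hc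
      exact ⟨s, by omega, hs2⟩
    · have hf := step_facts g (show t < m by omega)
      refine ⟨t + 1, le_refl _, by omega⟩

def HitsAt {m : ℕ} (c : ℕ) (g : Fin m → Bool) : Prop :=
  ∃ s, s ≤ m ∧ downCount g s = upCount g s + c

open Classical in
noncomputable def tau {m : ℕ} (c : ℕ) (g : Fin m → Bool) : ℕ :=
  if h : HitsAt c g then
    Nat.find (⟨h.choose, h.choose_spec.2⟩ : ∃ s, downCount g s = upCount g s + c)
  else 0

open Classical in
lemma tau_spec {m c : ℕ} {g : Fin m → Bool} (h : HitsAt c g) :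
    tau c g ≤ m ∧ downCount g (tau c g) = upCount g (tau c g) + c ∧
      ∀ s < tau c g, downCount g s ≠ upCount g s + c := by
  rw [tau, dif_pos h]
  have hex : ∃ s, downCount g s = upCount g s + c := ⟨h.choose, h.choose_spec.2⟩
  refine ⟨?_, Nat.find_spec hex, fun s hs => Nat.find_min hex hs⟩
  exact le_trans (Nat.find_le h.choose_spec.2) h.choose_spec.1

noncomputable def reflPath {m : ℕ} (c : ℕ) (g : Fin m → Bool) : Fin m → Bool :=
  fun i => if (i : ℕ) < tau c g then g i else !(g i)

lemma refl_prefix {m c : ℕ} {g : Fin m → Bool} {s : ℕ} (hs : s ≤ tau c g) :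
    upCount (reflPath c g) s = upCount g s ∧ downCount (reflPath c g) s = downCount g s :=
  count_congr (fun i hi => by rw [reflPath]; simp only [if_pos (lt_of_lt_of_le hi hs)])

lemma refl_hits {m c : ℕ} {g : Fin m → Bool} (h : HitsAt c g) : HitsAt c (reflPath c g) := by
  obtain ⟨h1, h2, _⟩ := tau_spec h
  obtain ⟨hu, hd⟩ := refl_prefix (le_refl (tau c g))
  exact ⟨tau c g, h1, by rw [hu, hd]; exact h2⟩

lemma tau_refl {m c : ℕ} {g : Fin m → Bool} (h : HitsAt c g) :
    tau c (reflPath c g) = tau c g := by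
  obtain ⟨h1, h2, h3⟩ := tau_spec h
  obtain ⟨h1', h2', h3'⟩ := tau_spec (refl_hits h)
  by_contra hne
  rcases lt_or_gt_of_ne hne with hlt | hgt
  · obtain ⟨hu, hd⟩ := refl_prefix (le_of_lt hlt)
    exact h3 _ hlt (by rw [← hu, ← hd]; exact h2')
  · obtain ⟨hu, hd⟩ := refl_prefix (le_refl (tau c g))
    exact h3' _ hgt (by rw [hu, hd]; exact h2)

lemma refl_refl {m c : ℕ} {g : Fin m → Bool} (h : HitsAt c g) :
    reflPath c (reflPath c g) = g := by
  funext i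
  rw [reflPath, reflPath, tau_refl h]
  by_cases hi : (i : ℕ) < tau c g
  · rw [if_pos hi, if_pos hi]
  · rw [if_neg hi, if_neg hi, Bool.not_not]

lemma refl_suffix {m c : ℕ} {g : Fin m → Bool} (h : HitsAt c g) :
    ∀ t, tau c g ≤ t → t ≤ m →
      upCount (reflPath c g) t + downCount g (tau c g)
        = upCount g (tau c g) + downCount g t ∧
      downCount (reflPath c g) t + upCount g (tau c g)
        = downCount g (tau c g) + upCount g t := by
  intro t h1 h2
  induction t with
  | zero =>
    have h0 : tau c g = 0 := Nat.le_zero.mp h1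
    obtain ⟨hu, hd⟩ := refl_prefix (le_of_eq h0.symm)
    rw [h0]
    omega
  | succ t ih =>
    rcases Nat.lt_or_ge t (tau c g) with hlt | hge
    · have heq : tau c g = t + 1 := by omega
      obtain ⟨hu, hd⟩ := refl_prefix (le_of_eq heq.symm)
      rw [heq]
      omega
    · have ht : t < m := by omega
      obtain ⟨ihu, ihd⟩ := ih hge (by omega)
      have hval : reflPath c g ⟨t, ht⟩ = !(g ⟨t, ht⟩) := by
        rw [reflPath, if_neg (by simp only [not_lt]; exact hge)]
      rw [upCount_succ g ht, downCount_succ g ht, upCount_succ (reflPath c g) ht,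
        downCount_succ (reflPath c g) ht, hval]
      cases hb : g ⟨t, ht⟩ <;> simp <;> omega

lemma reflection_card (m u c : ℕ) (hm : m ≤ 2 * u + c + 1) :
    {g : Fin m → Bool | upCount g m = u ∧ HitsAt (c + 1) g}.ncard
      = Nat.choose m (u + c + 1) := by
  classical
  rw [← card_falseCount m (u + c + 1), ← Nat.card_coe_set_eq, ← Nat.card_coe_set_eq]
  refine Nat.card_congr ?_
  have key₁ : ∀ g : Fin m → Bool, upCount g m = u → HitsAt (c + 1) g →
      downCount (reflPath (c + 1) g) m = u + c + 1 := by
    intro g hu h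
    obtain ⟨h1, h2, _⟩ := tau_spec h
    obtain ⟨_, hd⟩ := refl_suffix h m h1 (le_refl m)
    omega
  have key₂ : ∀ g : Fin m → Bool, downCount g m = u + c + 1 → HitsAt (c + 1) g := by
    intro g hd
    have hsum := count_sum g m (le_refl m)
    obtain ⟨s, hs1, hs2⟩ := exists_hit g (c + 1) m (le_refl m) (by omega)
    exact ⟨s, hs1, hs2⟩
  have key₃ : ∀ g : Fin m → Bool, downCount g m = u + c + 1 →
      upCount (reflPath (c + 1) g) m = u ∧ HitsAt (c + 1) (reflPath (c + 1) g) := by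
    intro g hd
    have h := key₂ g hd
    obtain ⟨h1, h2, _⟩ := tau_spec h
    obtain ⟨hu, _⟩ := refl_suffix h m h1 (le_refl m)
    have hmono := count_mono g h1
    exact ⟨by omega, refl_hits h⟩
  exact
    { toFun := fun g => ⟨reflPath (c + 1) g.1, key₁ g.1 g.2.1 g.2.2⟩
      invFun := fun g => ⟨reflPath (c + 1) g.1, key₃ g.1 g.2⟩
      left_inv := fun g => Subtype.ext (refl_refl g.2.2)
      right_inv := fun g => Subtype.ext (refl_refl (key₂ g.1 g.2)) }

lemma good_card (m u c : ℕ) (hm : m ≤ 2 * u + c + 1) :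
    {g : Fin m → Bool | upCount g m = u ∧ ∀ s ≤ m, downCount g s ≤ upCount g s + c}.ncard
      + Nat.choose m (u + c + 1) = Nat.choose m u := by
  classical
  have hsplit : {g : Fin m → Bool | upCount g m = u}
      = {g : Fin m → Bool | upCount g m = u ∧ ∀ s ≤ m, downCount g s ≤ upCount g s + c}
        ∪ {g : Fin m → Bool | upCount g m = u ∧ HitsAt (c + 1) g} := by
    ext g
    simp only [Set.mem_union, Set.mem_setOf_eq]
    constructor
    · intro hu
      by_cases hall : ∀ s ≤ m, downCount g s ≤ upCount g s + c
      · exact Or.inl ⟨hu, hall⟩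
      · push_neg at hall
        obtain ⟨s, hs1, hs2⟩ := hall
        obtain ⟨s', hs1', hs2'⟩ := exists_hit g (c + 1) s hs1 (by omega)
        exact Or.inr ⟨hu, s', by omega, hs2'⟩
    · rintro (⟨hu, -⟩ | ⟨hu, -⟩) <;> exact hu
  have hdisj : Disjoint
      {g : Fin m → Bool | upCount g m = u ∧ ∀ s ≤ m, downCount g s ≤ upCount g s + c}
      {g : Fin m → Bool | upCount g m = u ∧ HitsAt (c + 1) g} := by
    rw [Set.disjoint_left]
    rintro g ⟨-, hall⟩ ⟨-, s, hs1, hs2⟩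
    have := hall s hs1
    omega
  have htot := card_trueCount m u
  rw [hsplit, Set.ncard_union_eq hdisj (Set.toFinite _) (Set.toFinite _),
    reflection_card m u c hm] at htot
  omega

/-- cardinality of the "middle" set -/
lemma middle_card (n k p : ℕ) (hk : 1 ≤ k) (hn : k + p ≤ n) :
    {g : Fin (2 * n - k - p) → Bool | upCount g (2 * n - k - p) = n - k ∧
        (∀ s ≤ 2 * n - k - p, downCount g s ≤ upCount g s + k) ∧
        HitsAt k g}.ncard + Nat.choose (2 * n - k - p) (n + 1)
      = Nat.choose (2 * n - k - p) n := by
  classical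
  set m := 2 * n - k - p with hm
  have h1 := good_card m (n - k) k (by omega)
  have h2 := good_card m (n - k) (k - 1) (by omega)
  have hsplit :
      {g : Fin m → Bool | upCount g m = n - k ∧ ∀ s ≤ m, downCount g s ≤ upCount g s + k}
      = {g : Fin m → Bool | upCount g m = n - k ∧ ∀ s ≤ m, downCount g s ≤ upCount g s + (k - 1)}
        ∪ {g : Fin m → Bool | upCount g m = n - k ∧
            (∀ s ≤ m, downCount g s ≤ upCount g s + k) ∧ HitsAt k g} := by
    ext g
    simp only [Set.mem_union, Set.mem_setOf_eq]
    constructor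
    · rintro ⟨hu, hall⟩
      by_cases hall' : ∀ s ≤ m, downCount g s ≤ upCount g s + (k - 1)
      · exact Or.inl ⟨hu, hall'⟩
      · push_neg at hall'
        obtain ⟨s, hs1, hs2⟩ := hall'
        have := hall s hs1
        exact Or.inr ⟨hu, hall, s, hs1, by omega⟩
    · rintro (⟨hu, hall⟩ | ⟨hu, hall, -⟩)
      · exact ⟨hu, fun s hs => by have := hall s hs; omega⟩
      · exact ⟨hu, hall⟩
  have hdisj : Disjoint
      {g : Fin m → Bool | upCount g m = n - k ∧ ∀ s ≤ m, downCount g s ≤ upCount g s + (k - 1)}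
      {g : Fin m → Bool | upCount g m = n - k ∧
          (∀ s ≤ m, downCount g s ≤ upCount g s + k) ∧ HitsAt k g} := by
    rw [Set.disjoint_left]
    rintro g ⟨-, hall⟩ ⟨-, -, s, hs1, hs2⟩
    have := hall s hs1
    omega
  rw [hsplit, Set.ncard_union_eq hdisj (Set.toFinite _) (Set.toFinite _)] at h1
  have hk1 : n - k + (k - 1) + 1 = n := by omega
  have hk2 : n - k + k + 1 = n + 1 := by omega
  rw [hk1] at h2
  rw [hk2] at h1
  omega

def midf (n k p : ℕ) (h : k + p ≤ n) (f : Fin (2 * n) → Bool) : Fin (2 * n - k - p) → Bool :=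
  fun i => f ⟨(i : ℕ) + k, by have := i.isLt; omega⟩

def extf (n k p : ℕ) (g : Fin (2 * n - k - p) → Bool) : Fin (2 * n) → Bool :=
  fun j => if (j : ℕ) < k then true
    else if h2 : (j : ℕ) - k < 2 * n - k - p then g ⟨(j : ℕ) - k, h2⟩ else false

lemma mid_counts (n k p : ℕ) (hk : 1 ≤ k) (hp : 1 ≤ p) (hn : k + p ≤ n)
    (f : Fin (2 * n) → Bool)
    (hfirst : ∀ i : Fin (2 * n), (i : ℕ) < k → f i = true)
    (hlast : ∀ i : Fin (2 * n), 2 * n - p ≤ (i : ℕ) → f i = false) :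
    ∀ t ≤ 2 * n, upCount f t = min t k + upCount (midf n k p hn f) (t - k) ∧
      downCount f t = downCount (midf n k p hn f) (t - k) + (t - (2 * n - p)) := by
  set m := 2 * n - k - p with hmdef
  set g := midf n k p hn f with hgdef
  intro t
  induction t with
  | zero =>
    intro _
    rw [upCount_zero, downCount_zero]
    have e0 : (0 : ℕ) - k = 0 := by omega
    rw [e0, upCount_zero, downCount_zero]
    omega
  | succ t ih =>
    intro ht
    have htlt : t < 2 * n := by omega
    obtain ⟨ihu, ihd⟩ := ih (by omega)
    rcases lt_or_ge t k with hcase | hcase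
    · have hf : f ⟨t, htlt⟩ = true := hfirst _ hcase
      rw [upCount_succ f htlt, downCount_succ f htlt, hf]
      have e1 : t + 1 - k = 0 := by omega
      have e2 : t - k = 0 := by omega
      rw [e1]
      rw [e2] at ihu ihd
      simp only [if_pos rfl]
      norm_num
      omega
    · rcases lt_or_ge t (2 * n - p) with hcase2 | hcase2
      · have hs : t - k < m := by omega
        have hfg : g ⟨t - k, hs⟩ = f ⟨t, htlt⟩ := by
          rw [hgdef]
          show f _ = f _
          congr 1
          exact Fin.ext (by simp; omega)
        have e1 : t + 1 - k = (t - k) + 1 := by omega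
        rw [upCount_succ f htlt, downCount_succ f htlt, e1, upCount_succ g hs,
          downCount_succ g hs, hfg]
        cases hb : f ⟨t, htlt⟩ <;> simp <;> omega
      · have hf : f ⟨t, htlt⟩ = false := hlast ⟨t, htlt⟩ (by show 2 * n - p ≤ t; omega)
        rw [upCount_succ f htlt, downCount_succ f htlt, hf]
        have s1 := count_stable g (show m ≤ t + 1 - k by omega)
        have s2 := count_stable g (show m ≤ t - k by omega)
        norm_num
        omega

lemma midf_extf (n k p : ℕ) (hk : 1 ≤ k) (hn : k + p ≤ n) (g : Fin (2 * n - k - p) → Bool) :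
    midf n k p hn (extf n k p g) = g := by
  funext i
  have hi := i.isLt
  simp only [midf, extf]
  rw [if_neg (by omega)]
  have h2 : (i : ℕ) + k - k < 2 * n - k - p := by omega
  rw [dif_pos h2]
  congr 1
  exact Fin.ext (by simp)

lemma extf_midf (n k p : ℕ) (hk : 1 ≤ k) (hp : 1 ≤ p) (hn : k + p ≤ n)
    (f : Fin (2 * n) → Bool)
    (hfirst : ∀ i : Fin (2 * n), (i : ℕ) < k → f i = true)
    (hlast : ∀ i : Fin (2 * n), 2 * n - p ≤ (i : ℕ) → f i = false) :
    extf n k p (midf n k p hn f) = f := by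
  funext j
  have hj := j.isLt
  simp only [extf]
  by_cases h1 : (j : ℕ) < k
  · rw [if_pos h1, hfirst j h1]
  · rw [if_neg h1]
    by_cases h2 : (j : ℕ) - k < 2 * n - k - p
    · rw [dif_pos h2, midf]
      congr 1
      exact Fin.ext (by simp; omega)
    · rw [dif_neg h2, hlast j (by omega)]

lemma forward_transfer (n k p : ℕ) (hk : 1 ≤ k) (hp : 1 ≤ p) (hn : k + p ≤ n)
    (f : Fin (2 * n) → Bool)
    (hdyck : ∀ t ≤ 2 * n, downCount f t ≤ upCount f t)
    (hend : upCount f (2 * n) = downCount f (2 * n))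
    (hfirst : ∀ i : Fin (2 * n), (i : ℕ) < k → f i = true)
    (hlast : ∀ i : Fin (2 * n), 2 * n - p ≤ (i : ℕ) → f i = false)
    (htouch : ∃ t, 0 < t ∧ t < 2 * n ∧ upCount f t = downCount f t) :
    upCount (midf n k p hn f) (2 * n - k - p) = n - k ∧
      (∀ s ≤ 2 * n - k - p,
        downCount (midf n k p hn f) s ≤ upCount (midf n k p hn f) s + k) ∧
      HitsAt k (midf n k p hn f) := by
  have rel := mid_counts n k p hk hp hn f hfirst hlast
  have hsum := count_sum f (2 * n) (le_refl _)
  obtain ⟨ru, rd⟩ := rel (2 * n) (le_refl _)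
  obtain ⟨su, sd⟩ := count_stable (midf n k p hn f) (show 2 * n - k - p ≤ 2 * n - k by omega)
  have hUg : upCount (midf n k p hn f) (2 * n - k - p) = n - k := by omega
  have hsg := count_sum (midf n k p hn f) (2 * n - k - p) (le_refl _)
  refine ⟨hUg, ?_, ?_⟩
  · intro s hs
    obtain ⟨ru', rd'⟩ := rel (s + k) (by omega)
    simp only [Nat.add_sub_cancel] at ru' rd'
    have hd := hdyck (s + k) (by omega)
    omega
  · obtain ⟨t, ht0, ht2, hte⟩ := htouch
    obtain ⟨ru', rd'⟩ := rel t (by omega)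
    by_cases h1 : t < k
    · have e2 : t - k = 0 := by omega
      rw [e2] at ru' rd'
      rw [upCount_zero] at ru'
      rw [downCount_zero] at rd'
      omega
    · by_cases h2 : t ≤ 2 * n - p
      · exact ⟨t - k, by omega, by omega⟩
      · obtain ⟨su', sd'⟩ := count_stable (midf n k p hn f)
          (show 2 * n - k - p ≤ t - k by omega)
        omega

lemma backward_transfer (n k p : ℕ) (hk : 1 ≤ k) (hp : 1 ≤ p) (hn : k + p ≤ n)
    (g : Fin (2 * n - k - p) → Bool)
    (hUg : upCount g (2 * n - k - p) = n - k)
    (hall : ∀ s ≤ 2 * n - k - p, downCount g s ≤ upCount g s + k)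
    (htouch : HitsAt k g) :
    (∀ t ≤ 2 * n, downCount (extf n k p g) t ≤ upCount (extf n k p g) t) ∧
      upCount (extf n k p g) (2 * n) = downCount (extf n k p g) (2 * n) ∧
      (∀ i : Fin (2 * n), (i : ℕ) < k → extf n k p g i = true) ∧
      (∀ i : Fin (2 * n), 2 * n - p ≤ (i : ℕ) → extf n k p g i = false) ∧
      (∃ t, 0 < t ∧ t < 2 * n ∧
        upCount (extf n k p g) t = downCount (extf n k p g) t) := by
  have hfirst : ∀ i : Fin (2 * n), (i : ℕ) < k → extf n k p g i = true := by
    intro i hi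
    simp only [extf]
    rw [if_pos hi]
  have hlast : ∀ i : Fin (2 * n), 2 * n - p ≤ (i : ℕ) → extf n k p g i = false := by
    intro i hi
    have hj := i.isLt
    simp only [extf]
    rw [if_neg (by omega), dif_neg (by omega)]
  have hmid : midf n k p hn (extf n k p g) = g := midf_extf n k p hk hn g
  have rel := mid_counts n k p hk hp hn (extf n k p g) hfirst hlast
  rw [hmid] at rel
  have hsg := count_sum g (2 * n - k - p) (le_refl _)
  have hdyck : ∀ t ≤ 2 * n, downCount (extf n k p g) t ≤ upCount (extf n k p g) t := by
    intro t ht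
    obtain ⟨ru, rd⟩ := rel t ht
    by_cases h1 : t < k
    · have e2 : t - k = 0 := by omega
      rw [e2] at ru rd
      rw [upCount_zero] at ru
      rw [downCount_zero] at rd
      omega
    · by_cases h2 : t ≤ 2 * n - p
      · have := hall (t - k) (by omega)
        omega
      · obtain ⟨su, sd⟩ := count_stable g (show 2 * n - k - p ≤ t - k by omega)
        omega
  refine ⟨hdyck, ?_, hfirst, hlast, ?_⟩
  · obtain ⟨ru, rd⟩ := rel (2 * n) (le_refl _)
    obtain ⟨su, sd⟩ := count_stable g (show 2 * n - k - p ≤ 2 * n - k by omega)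
    omega
  · obtain ⟨s, hs1, hs2⟩ := htouch
    obtain ⟨ru, rd⟩ := rel (s + k) (by omega)
    simp only [Nat.add_sub_cancel] at ru rd
    exact ⟨s + k, by omega, by omega, by omega⟩


/-- The number of Dyck paths of semilength `n` that start with at least `k`
upsteps, end with at least `p` downsteps, and touch the x-axis strictly
between the endpoints is `((k+p+1)/(n+1)) * C(2n-k-p, n)`. -/
theorem dyck_start_end_touch_count (n k p : ℕ) (hk : 1 ≤ k) (hp : 1 ≤ p) (hn : k + p ≤ n) :
    ({f : Fin (2 * n) → Bool | IsDyckPath f ∧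
        (∀ i : Fin (2 * n), (i : ℕ) < k → f i = true) ∧
        (∀ i : Fin (2 * n), 2 * n - p ≤ (i : ℕ) → f i = false) ∧
        (∃ t, 0 < t ∧ t < 2 * n ∧ upCount f t = downCount f t)}.ncard : ℚ)
      = ((k + p + 1 : ℚ) / (n + 1)) * (Nat.choose (2 * n - k - p) n) := by
  classical
  have hcard :
      ({f : Fin (2 * n) → Bool | IsDyckPath f ∧
          (∀ i : Fin (2 * n), (i : ℕ) < k → f i = true) ∧
          (∀ i : Fin (2 * n), 2 * n - p ≤ (i : ℕ) → f i = false) ∧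
          (∃ t, 0 < t ∧ t < 2 * n ∧ upCount f t = downCount f t)}).ncard
        = ({g : Fin (2 * n - k - p) → Bool | upCount g (2 * n - k - p) = n - k ∧
            (∀ s ≤ 2 * n - k - p, downCount g s ≤ upCount g s + k) ∧
            HitsAt k g}).ncard := by
    rw [← Nat.card_coe_set_eq, ← Nat.card_coe_set_eq]
    refine Nat.card_congr ?_
    refine
      { toFun := fun x => ⟨midf n k p hn x.1, ?_⟩
        invFun := fun y => ⟨extf n k p y.1, ?_⟩
        left_inv := ?_, right_inv := ?_ }
    · obtain ⟨⟨hdy, hend⟩, hfirst, hlast, htouch⟩ := x.2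
      exact forward_transfer n k p hk hp hn x.1 hdy hend hfirst hlast htouch
    · obtain ⟨hUg, hall, ht⟩ := y.2
      obtain ⟨h1, h2, h3, h4, h5⟩ := backward_transfer n k p hk hp hn y.1 hUg hall ht
      exact ⟨⟨h1, h2⟩, h3, h4, h5⟩
    · rintro ⟨f, hf⟩
      exact Subtype.ext (extf_midf n k p hk hp hn f hf.2.1 hf.2.2.1)
    · rintro ⟨g, hg⟩
      exact Subtype.ext (midf_extf n k p hk hn g)
  rw [hcard]
  have key := middle_card n k p hk hn
  have hchoose := Nat.choose_succ_right_eq (2 * n - k - p) n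
  have hmn : 2 * n - k - p - n = n - (k + p) := by clear hcard key; omega
  rw [hmn] at hchoose
  have hq1 : (({g : Fin (2 * n - k - p) → Bool | upCount g (2 * n - k - p) = n - k ∧
      (∀ s ≤ 2 * n - k - p, downCount g s ≤ upCount g s + k) ∧
      HitsAt k g}).ncard : ℚ) + (Nat.choose (2 * n - k - p) (n + 1) : ℚ)
        = (Nat.choose (2 * n - k - p) n : ℚ) := by exact_mod_cast congrArg Nat.cast key
  have hq2 : ((Nat.choose (2 * n - k - p) (n + 1) * (n + 1) : ℕ) : ℚ)
      = ((Nat.choose (2 * n - k - p) n * (n - (k + p)) : ℕ) : ℚ) := by exact_mod_cast hchoose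
  push_cast [Nat.cast_sub hn] at hq2
  have hn1 : ((n : ℚ) + 1) ≠ 0 := by positivity
  rw [div_mul_eq_mul_div, eq_div_iff hn1]
  linear_combination ((n : ℚ) + 1) * hq1 - hq2
end

section
/- For d ≥ 0 and n ≥ d, the coefficient of x^n in x^d * C(x)^(d+1), where C(x) is the Catalan generating function, equals ((d+1)/(n+1)) * C(2n-d, n). -/
/-!
Since `C = 1 + x C²`, we have `C^(d+1) = C^d + x C^(d+2)`, so `a(d, m) = [x^m] C^(d+1)` satisfies
`a(d+1, m+1) = a(d, m+1) + a(d+2, m)`, with `a(d, 0) = 1` and `a(0, m) = catalan m`.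
By Pascal's rule the ballot numbers `(d+1)/(m+d+1) * C(2m+d, m)` satisfy the same recurrence
and boundary values; shifting by `x^d` gives the theorem.
-/

open PowerSeries

/-- The Catalan generating function `C(x) = ∑ catalan n * x^n`. -/
noncomputable def catalanGF : PowerSeries ℚ := PowerSeries.mk fun n => (catalan n : ℚ)

theorem catalanGF_eq_map_catalanSeries :
    catalanGF = PowerSeries.map (Nat.castRingHom ℚ) catalanSeries := by
  ext n
  simp [catalanGF]

theorem catalanGF_eq_one_add_X_mul_sq : catalanGF = 1 + X * catalanGF ^ 2 := by
  have h := congrArg (PowerSeries.map (Nat.castRingHom ℚ)) catalanSeries_sq_mul_X_add_one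
  rw [map_add, map_mul, map_pow, map_X, map_one, ← catalanGF_eq_map_catalanSeries] at h
  linear_combination -h

theorem catalanGF_pow_succ_eq (d : ℕ) :
    catalanGF ^ (d + 1) = catalanGF ^ d + X * catalanGF ^ (d + 2) := by
  rw [pow_succ]
  nth_rw 2 [catalanGF_eq_one_add_X_mul_sq]
  ring

/-- Equal to the ballot number `(d+1)/(2m+d+1) * C(2m+d+1, m)`. -/
noncomputable def ballot (d m : ℕ) : ℚ := (d + 1) * (2 * m + d).choose m / (m + d + 1)

theorem ballot_zero_right (d : ℕ) : ballot d 0 = 1 := by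
  simp only [ballot, mul_zero, zero_add, Nat.choose_zero_right, Nat.cast_one, mul_one,
    Nat.cast_zero]
  exact div_self (by positivity)

theorem ballot_zero_left (m : ℕ) : ballot 0 m = catalan m := by
  have h : ((m + 1 : ℕ) : ℚ) * catalan m = (2 * m).choose m := by
    exact_mod_cast succ_mul_catalan_eq_centralBinom m
  rw [ballot, add_zero, ← h]
  push_cast
  field_simp
  ring

theorem ballot_succ_succ (d m : ℕ) :
    ballot (d + 1) (m + 1) = ballot d (m + 1) + ballot (d + 2) m := by
  have pascal : (2 * m + d + 3).choose (m + 1)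
      = (2 * m + d + 2).choose m + (2 * m + d + 2).choose (m + 1) :=
    Nat.choose_succ_succ _ _
  have ratio : ((2 * m + d + 2).choose (m + 1) : ℚ) * (m + 1)
      = (2 * m + d + 2).choose m * (m + d + 2) := by
    have := Nat.choose_succ_right_eq (2 * m + d + 2) m
    rw [show 2 * m + d + 2 - m = m + d + 2 by omega] at this
    exact_mod_cast this
  simp only [ballot]
  rw [show 2 * (m + 1) + (d + 1) = 2 * m + d + 3 by ring,
    show 2 * (m + 1) + d = 2 * m + d + 2 by ring,
    show 2 * m + (d + 2) = 2 * m + d + 2 by ring, pascal]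
  push_cast
  field_simp
  linear_combination (m + d + 3) * ratio

theorem coeff_catalanGF_pow_succ (m d : ℕ) : coeff m (catalanGF ^ (d + 1)) = ballot d m := by
  induction m generalizing d with
  | zero => simp [ballot_zero_right, catalanGF]
  | succ m ihm =>
    induction d with
    | zero => simp [ballot_zero_left, catalanGF]
    | succ d ihd =>
      rw [catalanGF_pow_succ_eq, map_add, coeff_succ_X_mul, ihd, ihm, ballot_succ_succ]

/-- For `n ≥ d`, the coefficient of `x^n` in `x^d * C(x)^(d+1)` is
`((d+1)/(n+1)) * C(2n-d, n)`. -/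
theorem coeff_xd_catalanGF_pow (d n : ℕ) (hdn : d ≤ n) :
    PowerSeries.coeff n (PowerSeries.X ^ d * catalanGF ^ (d + 1))
      = ((d + 1 : ℚ) / (n + 1)) * (Nat.choose (2 * n - d) n) := by
  obtain ⟨m, rfl⟩ : ∃ m, n = m + d := ⟨n - d, by omega⟩
  rw [coeff_X_pow_mul, coeff_catalanGF_pow_succ, ballot,
    show 2 * (m + d) - d = m + (m + d) by omega, ← Nat.choose_symm_add,
    show m + (m + d) = 2 * m + d by ring]
  push_cast
  ring
end

section
/- For nonnegative integers k, p with d = k+p and n ≥ d, the number of Dyck paths of semilength n that start with at least k upsteps, end with at least p downsteps, and touch the x-axis between the endpoints equals the number of Standard Young Tableaux of shape (n, n-d). -/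
/-- A two-row Standard Young Tableau of shape `(n, n-d)`, given by its rows
`top : Fin n → Fin (2*n-d)` and `bot : Fin (n-d) → Fin (2*n-d)` (entries are
`0`-indexed): rows strictly increase, columns strictly increase, and the two
rows partition all the entries. -/
def IsSYT (n d : ℕ) (top : Fin n → Fin (2*n - d)) (bot : Fin (n - d) → Fin (2*n - d)) : Prop :=
  StrictMono top ∧ StrictMono bot ∧
  (∀ j : Fin (n - d), top (Fin.castLE (Nat.sub_le n d) j) < bot j) ∧
  (∀ i j, top i ≠ bot j) ∧
  (∀ v : Fin (2*n - d), (∃ i, top i = v) ∨ (∃ j, bot j = v))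

namespace DyckSYT

open List

def height (l : List Bool) : ℤ := (l.map fun b => if b then 1 else -1).sum

def IsBallotFrom (h : ℤ) (l : List Bool) : Prop := ∀ t, 0 ≤ h + height (l.take t)

/-- The path traversed backwards. -/
def reversal (l : List Bool) : List Bool := (l.map not).reverse

section Height

@[simp] lemma height_nil : height [] = 0 := rfl

@[simp] lemma height_cons (b : Bool) (l : List Bool) :
    height (b :: l) = (if b then 1 else -1) + height l := by
  simp [height]

@[simp] lemma height_append (x y : List Bool) : height (x ++ y) = height x + height y := by
  simp [height]

@[simp] lemma height_replicate (m : ℕ) (b : Bool) :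
    height (replicate m b) = (if b then 1 else -1) * m := by
  cases b <;> simp [height, mul_comm]

@[simp] lemma height_reverse (l : List Bool) : height l.reverse = height l := by
  simp [height]

@[simp] lemma height_map_not (l : List Bool) : height (l.map not) = -height l := by
  induction l with
  | nil => rfl
  | cons b l ih => cases b <;> simp [ih] <;> ring

@[simp] lemma height_reversal (l : List Bool) : height (reversal l) = -height l := by
  simp [reversal]

@[simp] lemma reversal_reversal (l : List Bool) : reversal (reversal l) = l := by
  simp [reversal, map_reverse, Function.comp_def]

@[simp] lemma length_reversal (l : List Bool) : (reversal l).length = l.length := by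
  simp [reversal]

lemma height_take_add_height_drop (l : List Bool) (t : ℕ) :
    height (l.take t) + height (l.drop t) = height l := by
  rw [← height_append, take_append_drop]

lemma height_take_succ (l : List Bool) {t : ℕ} (ht : t < l.length) :
    height (l.take (t + 1)) = height (l.take t) + if l[t] then 1 else -1 := by
  rw [take_add_one, getElem?_eq_getElem ht, Option.toList_some, height_append]
  simp [height]

lemma height_take_length_add (x y : List Bool) (t : ℕ) :
    height ((x ++ y).take (x.length + t)) = height x + height (y.take t) := by
  rw [take_length_add_append, height_append]

lemma height_take_reversal (l : List Bool) (t : ℕ) :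
    height ((reversal l).take t) = height (l.take (l.length - t)) - height l := by
  rw [reversal, take_reverse, length_map, ← map_drop, height_reverse, height_map_not,
    ← height_take_add_height_drop l (l.length - t)]
  ring

end Height

section Ballot

variable {h : ℤ} {l x y : List Bool}

lemma IsBallotFrom.nonneg (hl : IsBallotFrom h l) : 0 ≤ h := by
  simpa using hl 0

lemma IsBallotFrom.mono (hl : IsBallotFrom h l) {h' : ℤ} (hh : h ≤ h') : IsBallotFrom h' l :=
  fun t => by linarith [hl t]

lemma isBallotFrom_iff_forall_le_length :
    IsBallotFrom h l ↔ ∀ t ≤ l.length, 0 ≤ h + height (l.take t) := by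
  refine ⟨fun hl t _ => hl t, fun hl t => ?_⟩
  rw [take_eq_take_min]
  exact hl _ (min_le_right _ _)

lemma isBallotFrom_append :
    IsBallotFrom h (x ++ y) ↔ IsBallotFrom h x ∧ IsBallotFrom (h + height x) y := by
  refine ⟨fun hxy => ⟨fun t => ?_, fun t => ?_⟩, fun ⟨hx, hy⟩ t => ?_⟩
  · have := hxy (min t x.length)
    rwa [take_append_of_le_length (min_le_right _ _), ← take_eq_take_min] at this
  · have := hxy (x.length + t)
    rwa [height_take_length_add, ← add_assoc] at this
  · rw [take_append, height_append]
    rcases le_total t x.length with ht | ht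
    · simpa [Nat.sub_eq_zero_of_le ht] using hx t
    · rw [take_of_length_le ht, ← add_assoc]
      exact hy _

lemma isBallotFrom_cons {c : Bool} :
    IsBallotFrom h (c :: l) ↔ 0 ≤ h ∧ IsBallotFrom (h + if c then 1 else -1) l := by
  refine ⟨fun hl => ⟨hl.nonneg, fun t => ?_⟩, fun ⟨h0, hl⟩ t => ?_⟩
  · simpa [add_assoc] using hl (t + 1)
  · cases t with
    | zero => simpa using h0
    | succ t => simpa [add_assoc] using hl t

lemma isBallotFrom_reversal : IsBallotFrom h (reversal l) ↔ IsBallotFrom (h - height l) l := by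
  refine ⟨fun hl t => ?_, fun hl t => ?_⟩
  · have := hl (l.length - min t l.length)
    rw [height_take_reversal, Nat.sub_sub_self (min_le_right _ _), ← take_eq_take_min] at this
    linarith
  · rw [height_take_reversal]
    linarith [hl (l.length - t)]

lemma isBallotFrom_replicate_true (hh : 0 ≤ h) (m : ℕ) : IsBallotFrom h (replicate m true) :=
  fun t => by
    rw [take_replicate]
    simp only [height_replicate, if_true, one_mul]
    positivity

lemma isBallotFrom_replicate_false {m : ℕ} (hm : (m : ℤ) ≤ h) :
    IsBallotFrom h (replicate m false) := fun t => by
  rw [take_replicate]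
  simp only [height_replicate, Bool.false_eq_true, if_false]
  have : ((min t m : ℕ) : ℤ) ≤ m := by exact_mod_cast min_le_right t m
  linarith

end Ballot

section Decomposition

def dyckWords (n k p : ℕ) : Set (List Bool) :=
  {w | w.length = 2 * n ∧ IsBallotFrom 0 w ∧ height w = 0 ∧
    w.take k = replicate k true ∧ w.drop (2 * n - p) = replicate p false ∧
    ∃ t, 0 < t ∧ t < 2 * n ∧ height (w.take t) = 0}

def ballotWords (N : ℕ) (d : ℤ) : Set (List Bool) :=
  {v | v.length = N ∧ IsBallotFrom 0 v ∧ height v = d}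

def ballotPairs (n k p : ℕ) : Set (List Bool × List Bool) :=
  {xb | IsBallotFrom 0 xb.1 ∧ height xb.1 = k - 1 ∧ IsBallotFrom 0 xb.2 ∧ height xb.2 = p ∧
    xb.1.length + xb.2.length + k + p + 1 = 2 * n}

def toDyck (k p : ℕ) (xb : List Bool × List Bool) : List Bool :=
  replicate k true ++ reversal xb.1 ++ false :: xb.2 ++ replicate p false

def toBallot (xb : List Bool × List Bool) : List Bool :=
  xb.2 ++ true :: xb.1

variable {n k p : ℕ} {x b : List Bool}

lemma mem_ballotPairs : (x, b) ∈ ballotPairs n k p ↔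
    IsBallotFrom 0 x ∧ height x = k - 1 ∧ IsBallotFrom 0 b ∧ height b = p ∧
      x.length + b.length + k + p + 1 = 2 * n := Iff.rfl

lemma height_take_toDyck_pos (hk : 1 ≤ k) (hx : IsBallotFrom 0 x) (hxk : height x = k - 1)
    {t : ℕ} (ht₀ : 0 < t) (ht : t ≤ k + x.length) :
    0 < height ((toDyck k p (x, b)).take t) := by
  obtain ⟨t, rfl⟩ := Nat.exists_eq_add_one_of_ne_zero ht₀.ne'
  have hprefix : IsBallotFrom 0 (replicate (k - 1) true ++ reversal x) := by
    rw [isBallotFrom_append, isBallotFrom_reversal]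
    refine ⟨isBallotFrom_replicate_true le_rfl _, hx.mono ?_⟩
    simp [hxk, hk]
  have hsplit : toDyck k p (x, b) = true :: (replicate (k - 1) true ++ reversal x) ++
      (false :: b ++ replicate p false) := by
    rw [← cons_append, ← replicate_succ, Nat.sub_add_cancel hk]
    simp [toDyck]
  rw [hsplit, take_append_of_le_length (by simp; omega), take_succ_cons, height_cons, if_pos rfl]
  linarith [hprefix t]

lemma height_take_toDyck_return (hxk : height x = k - 1) :
    height ((toDyck k p (x, b)).take (k + x.length + 1)) = 0 := by
  have : toDyck k p (x, b) =
      (replicate k true ++ reversal x ++ [false]) ++ (b ++ replicate p false) := by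
    simp [toDyck]
  rw [this, take_left' (by simp; omega)]
  simp [hxk]
  ring

lemma toDyck_mem (hk : 1 ≤ k) (hp : 1 ≤ p) (hxb : (x, b) ∈ ballotPairs n k p) :
    toDyck k p (x, b) ∈ dyckWords n k p := by
  obtain ⟨hx, hxk, hb, hbp, hlen⟩ := mem_ballotPairs.1 hxb
  refine ⟨by simp [toDyck]; omega, ?_, by simp [toDyck, hxk, hbp]; ring, ?_, ?_,
    ⟨k + x.length + 1, by omega, by omega, height_take_toDyck_return hxk⟩⟩
  · simp only [toDyck, isBallotFrom_append, isBallotFrom_cons, isBallotFrom_reversal]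
    refine ⟨⟨⟨isBallotFrom_replicate_true le_rfl _, hx.mono ?_⟩, ?_, hb.mono ?_⟩,
      isBallotFrom_replicate_false ?_⟩ <;> simp [hxk, hbp]
    linarith
  · rw [toDyck, append_assoc, append_assoc]
    exact take_left' (by simp)
  · rw [toDyck, drop_left' (by simp; omega)]

lemma toDyck_injOn (hk : 1 ≤ k) : Set.InjOn (toDyck k p) (ballotPairs n k p) := by
  -- the first return to the axis happens at time `k + x.length + 1`
  have key : ∀ {x b x' b'}, (x, b) ∈ ballotPairs n k p → (x', b') ∈ ballotPairs n k p →
      toDyck k p (x, b) = toDyck k p (x', b') → ¬ x'.length < x.length := by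
    intro x b x' b' hxb hxb' heq hlt
    have hpos := height_take_toDyck_pos (p := p) (b := b) hk (mem_ballotPairs.1 hxb).1 hxb.2.1
      (t := k + x'.length + 1) (by omega) (by omega)
    rw [heq, height_take_toDyck_return hxb'.2.1] at hpos
    exact hpos.false
  rintro ⟨x, b⟩ hxb ⟨x', b'⟩ hxb' heq
  have hlen : x.length = x'.length := by
    have := key hxb hxb' heq
    have := key hxb' hxb heq.symm
    omega
  simp only [toDyck, append_assoc, append_cancel_left_eq] at heq
  obtain ⟨hx, hb⟩ := append_inj heq (by simp [hlen])
  simp only [cons_append, cons.injEq, true_and, append_cancel_right_eq] at hb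
  rw [← reversal_reversal x, hx, reversal_reversal, hb]

lemma exists_first_return {w : List Bool} (hw : w ∈ dyckWords n k p) :
    ∃ s, k < s ∧ s ≤ 2 * n - p ∧ height (w.take s) = 0 ∧
      ∀ t, 0 < t → t < s → 0 < height (w.take t) := by
  obtain ⟨hlen, hball, hzero, htake, hdrop, hex⟩ := hw
  obtain ⟨hs₀, hs, hss⟩ := Nat.find_spec hex
  refine ⟨Nat.find hex, ?_, ?_, hss, fun t ht₀ ht => lt_of_le_of_ne (by simpa using hball t)
    fun h => Nat.find_min hex ht ⟨ht₀, by omega, h.symm⟩⟩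
  · by_contra! hsk
    rw [← min_eq_left hsk, ← take_take, htake, take_replicate, min_eq_left hsk] at hss
    simp at hss
  · have hp : p ≤ 2 * n := by
      have := congrArg length hdrop
      simp only [length_drop, length_replicate, hlen] at this
      omega
    by_contra! hsp
    obtain ⟨j, hj⟩ : ∃ j, Nat.find hex = 2 * n - p + j :=
      ⟨Nat.find hex - (2 * n - p), by omega⟩
    have := height_take_add_height_drop w (Nat.find hex)
    rw [hss, hzero, hj, ← drop_drop, hdrop, drop_replicate] at this
    simp at this
    omega

lemma exists_toDyck_eq (hk : 1 ≤ k) {w : List Bool} (hw : w ∈ dyckWords n k p) :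
    ∃ xb ∈ ballotPairs n k p, toDyck k p xb = w := by
  obtain ⟨s, hks, hsp, hss, hpos⟩ := exists_first_return hw
  obtain ⟨hlen, hball, hzero, htake, hdrop, -⟩ := hw
  have hstep := height_take_succ w (t := s - 1) (by omega)
  rw [Nat.sub_add_cancel (by omega : 1 ≤ s), hss] at hstep
  have hdown : w[s - 1] = false := by
    by_contra hwd
    rw [Bool.not_eq_false] at hwd
    simp only [hwd, if_true] at hstep
    linarith [hpos (s - 1) (by omega) (by omega)]
  simp only [hdown, Bool.false_eq_true, if_false] at hstep
  set a := (w.take (s - 1)).drop k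
  set b := (w.drop s).take (2 * n - p - s)
  have hwa : w.take (s - 1) = replicate k true ++ a := by
    rw [← htake, ← take_append_drop k (w.take (s - 1)), take_take, min_eq_left (by omega)]
  have hwb : w.drop s = b ++ replicate p false := by
    rw [← hdrop, ← take_append_drop (2 * n - p - s) (w.drop s), drop_drop,
      Nat.add_sub_cancel' hsp]
  have hw : w = replicate k true ++ a ++ false :: b ++ replicate p false := by
    conv_lhs => rw [← take_append_drop (s - 1) w, drop_eq_getElem_cons (by omega), hdown,
      Nat.sub_add_cancel (by omega : 1 ≤ s), hwa, hwb]
    simp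
  have ha : height a = 1 - k := by
    have := congrArg height hwa
    simp at this
    linarith
  rw [hw] at hball hzero
  simp only [isBallotFrom_append, isBallotFrom_cons] at hball
  refine ⟨(reversal a, b), mem_ballotPairs.2 ⟨?_, by simp [ha], hball.1.2.2.mono ?_, ?_, ?_⟩,
    by rw [hw]; simp [toDyck]⟩
  · rw [isBallotFrom_reversal, ha]
    intro t
    have := hpos (min (k + t) (s - 1)) (by omega) (by omega)
    rw [← take_take, hwa, take_append] at this
    simp [take_replicate] at this
    linarith
  · simp [ha]
  · simp [ha] at hzero
    linarith
  · simp [a, b]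
    omega

lemma bijOn_toDyck (hk : 1 ≤ k) (hp : 1 ≤ p) :
    Set.BijOn (toDyck k p) (ballotPairs n k p) (dyckWords n k p) :=
  ⟨fun _ hxb => toDyck_mem hk hp hxb, toDyck_injOn hk, fun _ hw => exists_toDyck_eq hk hw⟩

lemma height_lt_height_take_toBallot (hx : IsBallotFrom 0 x) {t : ℕ} (ht : b.length < t) :
    height b < height ((toBallot (x, b)).take t) := by
  obtain ⟨j, rfl⟩ := Nat.exists_eq_add_of_lt ht
  rw [toBallot, add_assoc, height_take_length_add, take_succ_cons, height_cons, if_pos rfl]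
  linarith [hx j]

lemma toBallot_mem (hxb : (x, b) ∈ ballotPairs n k p) :
    toBallot (x, b) ∈ ballotWords (2 * n - (k + p)) (k + p : ℕ) := by
  obtain ⟨hx, hxk, hb, hbp, hlen⟩ := mem_ballotPairs.1 hxb
  refine ⟨by simp [toBallot]; omega, ?_, ?_⟩
  · simp only [toBallot, isBallotFrom_append, isBallotFrom_cons]
    exact ⟨hb, by simp [hbp], hx.mono (by simp [hbp]; positivity)⟩
  · simp [toBallot, hxk, hbp]
    ring

lemma toBallot_injOn : Set.InjOn toBallot (ballotPairs n k p) := by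
  -- `b.length` is the last visit of `toBallot (x, b)` to height `p`
  have key : ∀ {x b x' b'}, (x, b) ∈ ballotPairs n k p → (x', b') ∈ ballotPairs n k p →
      toBallot (x, b) = toBallot (x', b') → ¬ b.length < b'.length := by
    intro x b x' b' hxb hxb' heq hlt
    have hgt := height_lt_height_take_toBallot hxb.1 hlt
    rw [heq, toBallot, take_left' rfl, hxb.2.2.2.1, hxb'.2.2.2.1] at hgt
    exact hgt.false
  rintro ⟨x, b⟩ hxb ⟨x', b'⟩ hxb' heq
  have hlen : b.length = b'.length := by
    have := key hxb hxb' heq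
    have := key hxb' hxb heq.symm
    omega
  obtain ⟨hb, hx⟩ := append_inj heq hlen
  simp only [cons.injEq, true_and] at hx
  simp_all

lemma exists_last_visit (hk : 1 ≤ k) {v : List Bool}
    (hv : v ∈ ballotWords (2 * n - (k + p)) (k + p : ℕ)) :
    ∃ r, ∃ hr : r < v.length, v[r] = true ∧ height (v.take r) = p ∧
      ∀ t, r < t → p < height (v.take t) := by
  obtain ⟨-, -, hheight⟩ := hv
  push_cast at hheight
  set r := Nat.findGreatest (fun t => height (v.take t) ≤ p) v.length
  have hr : height (v.take r) ≤ p :=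
    Nat.findGreatest_spec (P := fun t => height (v.take t) ≤ p) (Nat.zero_le _) (by simp)
  have hgt : ∀ t, r < t → p < height (v.take t) := by
    intro t ht
    by_cases htN : t ≤ v.length
    · exact not_le.1 (Nat.findGreatest_is_greatest ht htN)
    · rw [take_of_length_le (by omega), hheight]
      linarith
  have hrN : r < v.length := by
    refine lt_of_le_of_ne (Nat.findGreatest_le _) fun hrN => ?_
    rw [hrN, take_length, hheight] at hr
    linarith
  have hstep := height_take_succ v hrN
  have hup : v[r] = true := by
    by_contra hvr
    rw [Bool.not_eq_true] at hvr
    simp only [hvr, Bool.false_eq_true, if_false] at hstep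
    linarith [hgt (r + 1) (by omega)]
  rw [hup, if_pos rfl] at hstep
  exact ⟨r, hrN, hup, by linarith [hgt (r + 1) (by omega)], hgt⟩

lemma exists_toBallot_eq (hk : 1 ≤ k) (hkp : k + p ≤ 2 * n) {v : List Bool}
    (hv : v ∈ ballotWords (2 * n - (k + p)) (k + p : ℕ)) :
    ∃ xb ∈ ballotPairs n k p, toBallot xb = v := by
  obtain ⟨r, hrN, hup, hrp, hgt⟩ := exists_last_visit hk hv
  obtain ⟨hlen, hball, hheight⟩ := hv
  have hstep := height_take_succ v hrN
  rw [hup, if_pos rfl, hrp] at hstep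
  have hdrop := height_take_add_height_drop v (r + 1)
  refine ⟨(v.drop (r + 1), v.take r),
    mem_ballotPairs.2 ⟨fun t => ?_, ?_, fun t => ?_, hrp, ?_⟩, ?_⟩
  · have := hgt (r + 1 + t) (by omega)
    rw [take_add, height_append] at this
    linarith
  · push_cast at hheight
    linarith
  · rw [take_take]
    exact hball _
  · simp only [length_drop, length_take]
    omega
  · rw [toBallot, ← hup, ← drop_eq_getElem_cons, take_append_drop]

lemma bijOn_toBallot (hk : 1 ≤ k) (hkp : k + p ≤ 2 * n) :
    Set.BijOn toBallot (ballotPairs n k p) (ballotWords (2 * n - (k + p)) (k + p : ℕ)) :=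
  ⟨fun _ hxb => toBallot_mem hxb, toBallot_injOn, fun _ hv => exists_toBallot_eq hk hkp hv⟩

end Decomposition

section Tuples

lemma ncard_preimage_ofFn {α : Type*} {m : ℕ} {L : Set (List α)}
    (hL : ∀ l ∈ L, l.length = m) :
    (ofFn ⁻¹' L : Set (Fin m → α)).ncard = L.ncard := by
  refine Set.ncard_preimage_of_injective_subset_range ofFn_injective fun l hl => ?_
  obtain rfl := hL l hl
  exact ⟨_, ofFn_getElem⟩

variable {m : ℕ} (f : Fin m → Bool)

lemma height_take_ofFn (t : ℕ) : height ((ofFn f).take t) = upCount f t - downCount f t := by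
  rw [height, map_take, map_ofFn, sum_take_ofFn, Function.comp_def, Finset.sum_ite,
    Finset.sum_const, Finset.sum_const, Finset.filter_filter, Finset.filter_filter, upCount,
    downCount]
  simp [sub_eq_add_neg]

lemma height_ofFn : height (ofFn f) = upCount f m - downCount f m := by
  rw [← height_take_ofFn, take_of_length_le (by simp)]

lemma isBallotFrom_ofFn_iff : IsBallotFrom 0 (ofFn f) ↔ ∀ t, downCount f t ≤ upCount f t := by
  simp [IsBallotFrom, height_take_ofFn]

lemma isDyckPath_iff : IsDyckPath f ↔ IsBallotFrom 0 (ofFn f) ∧ height (ofFn f) = 0 := by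
  simp [IsDyckPath, isBallotFrom_iff_forall_le_length, height_take_ofFn, height_ofFn, sub_eq_zero]

lemma take_ofFn_eq_replicate_iff {k : ℕ} (hk : k ≤ m) (c : Bool) :
    (ofFn f).take k = replicate k c ↔ ∀ i : Fin m, (i : ℕ) < k → f i = c := by
  simp only [eq_replicate_iff, length_take, length_ofFn, min_eq_left hk, forall_mem_iff_getElem,
    getElem_take, List.getElem_ofFn, Fin.forall_iff, true_and]
  exact ⟨fun h i _ hik => h i hik, fun h i hik => h i (by omega) hik⟩

lemma drop_ofFn_eq_replicate_iff {p : ℕ} (hp : p ≤ m) (c : Bool) :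
    (ofFn f).drop (m - p) = replicate p c ↔ ∀ i : Fin m, m - p ≤ (i : ℕ) → f i = c := by
  simp only [eq_replicate_iff, length_drop, length_ofFn, Nat.sub_sub_self hp,
    forall_mem_iff_getElem, getElem_drop, List.getElem_ofFn, Fin.forall_iff, true_and]
  refine ⟨fun h i hi hki => ?_, fun h i hi => h (m - p + i) (by omega) (by omega)⟩
  obtain ⟨j, rfl⟩ := Nat.exists_eq_add_of_le hki
  exact h j (by omega)

end Tuples

lemma dyckPaths_eq_preimage_ofFn {n k p : ℕ} (hk : k ≤ 2 * n) (hp : p ≤ 2 * n) :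
    {f : Fin (2 * n) → Bool | IsDyckPath f ∧
        (∀ i : Fin (2 * n), (i : ℕ) < k → f i = true) ∧
        (∀ i : Fin (2 * n), 2 * n - p ≤ (i : ℕ) → f i = false) ∧
        (∃ t, 0 < t ∧ t < 2 * n ∧ upCount f t = downCount f t)}
      = ofFn ⁻¹' dyckWords n k p := by
  ext f
  simp only [Set.mem_ofPred_eq, Set.mem_preimage, dyckWords, isDyckPath_iff, length_ofFn,
    take_ofFn_eq_replicate_iff f hk, drop_ofFn_eq_replicate_iff f hp, height_take_ofFn,
    sub_eq_zero, Nat.cast_inj, true_and]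
  tauto

section Tableaux

open Finset

lemma lt_iff_lt_card_filter_lt {α : Type*} [LinearOrder α] {c : ℕ} {e : Fin c → α}
    (he : StrictMono e) (j : Fin c) (t : α) : e j < t ↔ (j : ℕ) < #{i | e i < t} := by
  constructor
  · intro hjt
    rw [← Nat.add_one_le_iff, ← Fin.card_Iic]
    refine card_le_card fun i hi => ?_
    simp only [mem_Iic, Finset.mem_filter, Finset.mem_univ, true_and] at hi ⊢
    exact (he.monotone hi).trans_lt hjt
  · intro hj
    by_contra hjt
    have : #{i | e i < t} ≤ #(Iio j) := by
      refine card_le_card fun i hi => ?_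
      simp only [mem_Iio, Finset.mem_filter, Finset.mem_univ, true_and] at hi ⊢
      exact he.lt_iff_lt.1 (hi.trans_le (not_lt.1 hjt))
    rw [Fin.card_Iio] at this
    omega

variable {n c N : ℕ} {top : Fin n → Fin N} {bot : Fin c → Fin N}

lemma column_iff_ballot (hcn : c ≤ n) (htop : StrictMono top) (hbot : StrictMono bot)
    (hdisj : ∀ i j, top i ≠ bot j) :
    (∀ j : Fin c, top (Fin.castLE hcn j) < bot j) ↔
      ∀ t : ℕ, #{j | (bot j : ℕ) < t} ≤ #{i | (top i : ℕ) < t} := by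
  have htop' : StrictMono fun i => (top i : ℕ) := fun _ _ h => htop h
  have hbot' : StrictMono fun j => (bot j : ℕ) := fun _ _ h => hbot h
  constructor
  · intro hcol t
    by_contra! hlt
    have hc : #{j | (bot j : ℕ) < t} ≤ c := (card_filter_le _ _).trans (by simp)
    set j : Fin c := ⟨#{j | (bot j : ℕ) < t} - 1, by omega⟩
    have hbt := (lt_iff_lt_card_filter_lt hbot' j t).2 (by simp only [j]; omega)
    have htt := (lt_iff_lt_card_filter_lt htop' (Fin.castLE hcn j) t).1
      ((Fin.lt_def.1 (hcol j)).trans hbt)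
    simp only [Fin.val_castLE, j] at htt
    omega
  · intro hball j
    have hj := (lt_iff_lt_card_filter_lt hbot' j (bot j + 1)).1 (Nat.lt_add_one _)
    have hle := (lt_iff_lt_card_filter_lt htop' (Fin.castLE hcn j) (bot j + 1)).2
      (by simpa using hj.trans_le (hball _))
    have hne : (top (Fin.castLE hcn j) : ℕ) ≠ bot j := Fin.val_ne_of_ne (hdisj _ _)
    rw [Fin.lt_def]
    omega

def rowWord (top : Fin n → Fin N) : Fin N → Bool := fun v => decide (∃ i, top i = v)

lemma upCount_rowWord (htop : Function.Injective top) (t : ℕ) :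
    upCount (rowWord top) t = #{i | (top i : ℕ) < t} := by
  rw [upCount, ← card_image_of_injective _ htop]
  congr 1
  ext v
  simp only [rowWord, Finset.mem_filter, Finset.mem_univ, true_and, decide_eq_true_eq,
    Finset.mem_image]
  constructor
  · rintro ⟨hvt, i, rfl⟩
    exact ⟨i, hvt, rfl⟩
  · rintro ⟨i, hit, rfl⟩
    exact ⟨hit, i, rfl⟩

lemma downCount_rowWord (hbot : Function.Injective bot)
    (hcompl : ∀ v, (∃ j, bot j = v) ↔ ¬ ∃ i, top i = v) (t : ℕ) :
    downCount (rowWord top) t = #{j | (bot j : ℕ) < t} := by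
  rw [downCount, ← card_image_of_injective _ hbot]
  congr 1
  ext v
  simp only [rowWord, Finset.mem_filter, Finset.mem_univ, true_and, decide_eq_false_iff_not,
    Finset.mem_image]
  constructor
  · rintro ⟨hvt, hv⟩
    obtain ⟨j, rfl⟩ := (hcompl v).2 hv
    exact ⟨j, hvt, rfl⟩
  · rintro ⟨j, hjt, rfl⟩
    exact ⟨hjt, (hcompl _).1 ⟨j, rfl⟩⟩

end Tableaux

end DyckSYT

namespace IsSYT

open DyckSYT Finset

variable {n d : ℕ} {top : Fin n → Fin (2 * n - d)} {bot : Fin (n - d) → Fin (2 * n - d)}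

lemma exists_bot_iff (h : IsSYT n d top bot) (v : Fin (2 * n - d)) :
    (∃ j, bot j = v) ↔ ¬ ∃ i, top i = v :=
  ⟨fun ⟨j, hj⟩ ⟨i, hi⟩ => h.2.2.2.1 i j (hi.trans hj.symm), (h.2.2.2.2 v).resolve_left⟩

lemma ofFn_rowWord_mem (hdn : d ≤ n) (h : IsSYT n d top bot) :
    List.ofFn (rowWord top) ∈ ballotWords (2 * n - d) d := by
  have hup := upCount_rowWord h.1.injective
  have hdown := downCount_rowWord h.2.1.injective h.exists_bot_iff
  refine ⟨List.length_ofFn, ?_, ?_⟩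
  · rw [isBallotFrom_ofFn_iff]
    intro t
    rw [hup, hdown]
    exact (column_iff_ballot (Nat.sub_le n d) h.1 h.2.1 h.2.2.2.1).1 h.2.2.1 t
  · rw [height_ofFn, hup, hdown]
    simp only [Fin.is_lt, filter_true, card_univ, Fintype.card_fin]
    omega

end IsSYT

namespace DyckSYT

open Finset

variable {n d : ℕ}

lemma exists_isSYT_rowWord_eq (hdn : d ≤ n) {f : Fin (2 * n - d) → Bool}
    (hf : List.ofFn f ∈ ballotWords (2 * n - d) d) :
    ∃ top bot, IsSYT n d top bot ∧ rowWord top = f := by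
  obtain ⟨-, hball, hheight⟩ := hf
  set S : Finset (Fin (2 * n - d)) := {v | f v = true}
  have hup : upCount f (2 * n - d) = #S := by simp [upCount, S]
  have hdown : downCount f (2 * n - d) = #Sᶜ := by simp [downCount, S, compl_filter]
  have hsum : #S + #Sᶜ = 2 * n - d := by simp [card_add_card_compl]
  rw [height_ofFn, hup, hdown] at hheight
  have hS : #S = n := by omega
  have hSc : #Sᶜ = n - d := by omega
  set top := S.orderEmbOfFin hS
  set bot := Sᶜ.orderEmbOfFin hSc
  have htop : ∀ v, (∃ i, top i = v) ↔ f v = true := fun v => by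
    rw [← Set.mem_range, range_orderEmbOfFin]
    simp [S]
  have hcompl : ∀ v, (∃ j, bot j = v) ↔ ¬ ∃ i, top i = v := fun v => by
    rw [← Set.mem_range, range_orderEmbOfFin, htop]
    simp [S]
  have hrow : rowWord top = f := funext fun v => by simp [rowWord, htop]
  have hdisj : ∀ i j, top i ≠ bot j := fun i j h => (hcompl _).1 ⟨j, rfl⟩ ⟨i, h⟩
  refine ⟨top, bot, ⟨top.strictMono, bot.strictMono, ?_, hdisj, fun v => ?_⟩, hrow⟩
  · refine (column_iff_ballot (Nat.sub_le n d) top.strictMono bot.strictMono hdisj).2 fun t => ?_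
    rw [← upCount_rowWord top.injective, ← downCount_rowWord bot.injective hcompl, hrow]
    exact (isBallotFrom_ofFn_iff f).1 hball t
  · rw [hcompl]
    exact em _

lemma injOn_rowWord :
    Set.InjOn (fun pr : (Fin n → Fin (2 * n - d)) × (Fin (n - d) → Fin (2 * n - d)) =>
      rowWord pr.1) {pr | IsSYT n d pr.1 pr.2} := by
  rintro ⟨top, bot⟩ (h : IsSYT n d top bot) ⟨top', bot'⟩ (h' : IsSYT n d top' bot') heq
  have hrange : Set.range top = Set.range top' := by
    ext v
    simpa [rowWord] using congrFun heq v
  obtain rfl : top = top' := (h.1.range_inj h'.1).1 hrange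
  have hbot : Set.range bot = Set.range bot' := by
    ext v
    simp only [Set.mem_range, h.exists_bot_iff, h'.exists_bot_iff]
  rw [(h.2.1.range_inj h'.2.1).1 hbot]

lemma bijOn_rowWord (hdn : d ≤ n) :
    Set.BijOn (fun pr : (Fin n → Fin (2 * n - d)) × (Fin (n - d) → Fin (2 * n - d)) =>
      rowWord pr.1) {pr | IsSYT n d pr.1 pr.2} (List.ofFn ⁻¹' ballotWords (2 * n - d) d) :=
  ⟨fun _ h => h.ofFn_rowWord_mem hdn, injOn_rowWord, fun _ hf => by
    obtain ⟨top, bot, h, rfl⟩ := exists_isSYT_rowWord_eq hdn hf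
    exact ⟨(top, bot), h, rfl⟩⟩

end DyckSYT

open DyckSYT in
/-- The Dyck paths of semilength `n` starting with at least `k` upsteps, ending
with at least `p` downsteps and touching the x-axis strictly between the
endpoints are equinumerous with the Standard Young Tableaux of shape
`(n, n-d)`, where `d = k + p`. -/
theorem dyck_equinumerous_SYT (n k p d : ℕ) (hk : 1 ≤ k) (hp : 1 ≤ p)
    (hd : d = k + p) (hdn : d ≤ n) :
    {f : Fin (2 * n) → Bool | IsDyckPath f ∧
        (∀ i : Fin (2 * n), (i : ℕ) < k → f i = true) ∧
        (∀ i : Fin (2 * n), 2 * n - p ≤ (i : ℕ) → f i = false) ∧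
        (∃ t, 0 < t ∧ t < 2 * n ∧ upCount f t = downCount f t)}.ncard
      = {pr : (Fin n → Fin (2 * n - d)) × (Fin (n - d) → Fin (2 * n - d)) |
          IsSYT n d pr.1 pr.2}.ncard := by
  subst hd
  rw [dyckPaths_eq_preimage_ofFn (by omega) (by omega), ncard_preimage_ofFn fun _ hw => hw.1,
    ← (bijOn_toDyck hk hp).ncard_eq, (bijOn_toBallot hk (by omega)).ncard_eq,
    (bijOn_rowWord hdn).ncard_eq, ncard_preimage_ofFn fun _ hv => hv.1]
end

section
/- The number of Standard Young Tableaux of shape (n, n-d) equals ((d+1)/(n+1)) * C(2n-d, n), for n ≥ d ≥ 0. -/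
/-!
Read the entries `0, …, 2n-d-1` of a tableau in increasing order and record whether each lies in
the top row. Since both rows increase, the tableau is determined by this word, and the column
condition becomes the ballot condition: every prefix contains at least as many top-row letters as
bottom-row ones (the `j`-th bottom entry exceeds the `j`-th top entry iff the prefix ending at it
contains more than `j` top letters). Splitting off the last letter, the number `N(m, a)` of ballot
words of length `m` with `a` top letters obeys Pascal's rule, so `N(m, a) = C(m, a) - C(m, a+1)`,
and `C(m, n) - C(m, n+1) = (d+1)/(n+1) · C(m, n)` for `m = 2n-d`.
-/

open Finset

lemma Monotone.lt_card_filter_lt_iff {c : ℕ} {α : Type*} [LinearOrder α] {f : Fin c → α}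
    (hf : Monotone f) (y : α) (j : Fin c) : (j : ℕ) < #{i | f i < y} ↔ f j < y := by
  constructor
  · intro hj
    by_contra hfj
    have hsub : ({i | f i < y} : Finset (Fin c)) ⊆ Iio j := fun i hi => by
      simp only [mem_filter, mem_univ, true_and] at hi
      exact mem_Iio.mpr (lt_of_not_ge fun hji => hfj ((hf hji).trans_lt hi))
    have := card_le_card hsub
    rw [Fin.card_Iio] at this
    omega
  · intro hfj
    have hsub : Iic j ⊆ ({i | f i < y} : Finset (Fin c)) := fun i hi => by
      simpa using (hf (mem_Iic.mp hi)).trans_lt hfj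
    have := card_le_card hsub
    rw [Fin.card_Iic] at this
    omega

namespace Ballot

variable {m : ℕ}

def prefixCount (w : Fin m → Bool) (b : Bool) (k : ℕ) : ℕ :=
  #{u : Fin m | (u : ℕ) < k ∧ w u = b}

def IsBallot (w : Fin m → Bool) : Prop := ∀ k ≤ m, prefixCount w false k ≤ prefixCount w true k

open Classical in
noncomputable def ballotWords (m a : ℕ) : Finset (Fin m → Bool) :=
  {w | prefixCount w true m = a ∧ IsBallot w}

lemma prefixCount_snoc (t : Fin m → Bool) (x b : Bool) (k : ℕ) :
    prefixCount (Fin.snoc t x : Fin (m + 1) → Bool) b k =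
      prefixCount t b k + if m < k ∧ x = b then 1 else 0 := by
  simp only [prefixCount, card_filter, Fin.sum_univ_castSucc, Fin.snoc_castSucc, Fin.snoc_last,
    Fin.val_castSucc, Fin.val_last]

lemma prefixCount_false_add_true (w : Fin m → Bool) :
    prefixCount w false m + prefixCount w true m = m := by
  simpa [prefixCount, add_comm] using card_filter_add_card_filter_not (s := univ) (w · = true)

lemma prefixCount_of_le (w : Fin m → Bool) (b : Bool) {k : ℕ} (hk : m ≤ k) :
    prefixCount w b k = prefixCount w b m := by
  simp only [prefixCount, Fin.is_lt, true_and, fun u : Fin m => u.is_lt.trans_le hk]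

lemma isBallot_snoc_iff (t : Fin m → Bool) (x : Bool) :
    IsBallot (Fin.snoc t x : Fin (m + 1) → Bool) ↔
      IsBallot t ∧ prefixCount (Fin.snoc t x : Fin (m + 1) → Bool) false (m + 1) ≤
        prefixCount (Fin.snoc t x : Fin (m + 1) → Bool) true (m + 1) := by
  constructor
  · intro h
    refine ⟨fun k hk => ?_, h _ le_rfl⟩
    simpa [prefixCount_snoc, hk.not_gt] using h k (by omega)
  · rintro ⟨ht, hlast⟩ k hk
    rcases hk.lt_or_eq with hk | rfl
    · simpa [prefixCount_snoc, Nat.lt_succ_iff.mp hk |>.not_gt] using ht k (by omega)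
    · exact hlast

lemma ballotWords_eq_empty {a : ℕ} (h : 2 * a < m) : ballotWords m a = ∅ := by
  refine eq_empty_of_forall_notMem fun w hw => ?_
  simp only [ballotWords, mem_filter, mem_univ, true_and] at hw
  have := hw.2 m le_rfl
  have := prefixCount_false_add_true w
  omega

lemma snoc_mem_ballotWords_iff {a : ℕ} (h : m ≤ 2 * a + 1) (t : Fin m → Bool) (x : Bool) :
    (Fin.snoc t x : Fin (m + 1) → Bool) ∈ ballotWords (m + 1) (a + 1) ↔
      t ∈ ballotWords m (if x then a else a + 1) := by
  have hsum := prefixCount_false_add_true t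
  simp only [ballotWords, mem_filter, mem_univ, true_and, isBallot_snoc_iff, prefixCount_snoc,
    lt_add_one, prefixCount_of_le t _ (Nat.le_succ m)]
  cases x <;> simp <;> omega

lemma card_ballotWords_succ_succ {a : ℕ} (h : m ≤ 2 * a + 1) :
    #(ballotWords (m + 1) (a + 1)) = #(ballotWords m a) + #(ballotWords m (a + 1)) := by
  classical
  calc #(ballotWords (m + 1) (a + 1))
      = ∑ w : Fin (m + 1) → Bool, if w ∈ ballotWords (m + 1) (a + 1) then 1 else 0 := by simp
    _ = ∑ p : Bool × (Fin m → Bool),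
          if Fin.snoc p.2 p.1 ∈ ballotWords (m + 1) (a + 1) then 1 else 0 :=
      (Fintype.sum_equiv (Fin.snocEquiv fun _ => Bool) _ _ fun _ => rfl).symm
    _ = #(ballotWords m a) + #(ballotWords m (a + 1)) := by
      simp only [Fintype.sum_prod_type, Fintype.sum_bool, snoc_mem_ballotWords_iff h]
      simp

lemma card_ballotWords_add_choose {a : ℕ} (h : m ≤ 2 * a + 1) :
    #(ballotWords m a) + m.choose (a + 1) = m.choose a := by
  induction m generalizing a with
  | zero =>
    rcases a with _ | a <;> simp [ballotWords, prefixCount, IsBallot]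
  | succ m ih =>
    rcases a with _ | a
    · obtain rfl : m = 0 := by omega
      simp [ballotWords_eq_empty]
    rcases (show m = 2 * a + 2 ∨ m ≤ 2 * a + 1 by omega) with rfl | hm
    · rw [ballotWords_eq_empty (by omega), card_empty, zero_add,
        Nat.choose_symm_of_eq_add (by omega : 2 * a + 2 + 1 = a + 1 + 1 + (a + 1))]
    · rw [card_ballotWords_succ_succ hm, Nat.choose_succ_succ', Nat.choose_succ_succ']
      have := ih (a := a) (by omega)
      have := ih (a := a + 1) (by omega)
      omega

section Rows

variable {n b : ℕ} {top : Fin n → Fin m} {bot : Fin b → Fin m}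

lemma columns_lt_iff (hbn : b ≤ n) (htop : StrictMono top) (hbot : StrictMono bot)
    (hne : ∀ i j, top i ≠ bot j) :
    (∀ j, top (Fin.castLE hbn j) < bot j) ↔
      ∀ k ≤ m, #{j | (bot j : ℕ) < k} ≤ #{i | (top i : ℕ) < k} := by
  have htop' := Monotone.lt_card_filter_lt_iff (f := fun i => (top i : ℕ))
    fun _ _ h => htop.monotone h
  have hbot' := Monotone.lt_card_filter_lt_iff (f := fun j => (bot j : ℕ))
    fun _ _ h => hbot.monotone h
  constructor
  · intro hcol k _
    by_contra! hlt
    have hcard : #{j | (bot j : ℕ) < k} ≤ b := (card_filter_le _ _).trans (card_fin b).le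
    set j : Fin b := ⟨#{j | (bot j : ℕ) < k} - 1, by omega⟩
    have hj : (bot j : ℕ) < k := (hbot' k j).mp (Nat.sub_one_lt (by omega))
    have := (htop' k (Fin.castLE hbn j)).mpr ((Fin.val_strictMono (hcol j)).trans hj)
    simp [j] at this
    omega
  · intro hballot j
    have h1 := (hbot' (bot j + 1) j).mpr (Nat.lt_succ_self _)
    have h2 := (htop' (bot j + 1) (Fin.castLE hbn j)).mp
      (h1.trans_le (hballot _ (bot j).is_lt))
    exact lt_of_le_of_ne (Fin.le_iff_val_le_val.mpr (by omega)) (hne _ _)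

def rowWord (top : Fin n → Fin m) : Fin m → Bool := fun u => decide (∃ i, top i = u)

lemma card_filter_val_lt_exists_eq {f : Fin n → Fin m} (hf : Function.Injective f) (k : ℕ) :
    #{u : Fin m | (u : ℕ) < k ∧ ∃ i, f i = u} = #{i | (f i : ℕ) < k} := by
  rw [← card_image_of_injective _ hf]
  congr 1
  ext u
  simp only [mem_filter, mem_univ, true_and, mem_image]
  constructor
  · rintro ⟨hu, i, rfl⟩
    exact ⟨i, hu, rfl⟩
  · rintro ⟨i, hi, rfl⟩
    exact ⟨hi, i, rfl⟩

lemma prefixCount_rowWord_true (htop : Function.Injective top) (k : ℕ) :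
    prefixCount (rowWord top) true k = #{i | (top i : ℕ) < k} := by
  simpa [prefixCount, rowWord] using card_filter_val_lt_exists_eq htop k

lemma prefixCount_rowWord_false (hbot : Function.Injective bot)
    (hcompl : Set.range bot = (Set.range top)ᶜ) (k : ℕ) :
    prefixCount (rowWord top) false k = #{j | (bot j : ℕ) < k} := by
  have hword : ∀ u, rowWord top u = false ↔ ∃ j, bot j = u := fun u => by
    simpa [rowWord] using (Set.ext_iff.mp hcompl u).symm
  simpa [prefixCount, hword] using card_filter_val_lt_exists_eq hbot k

lemma isBallot_rowWord_iff (hbn : b ≤ n) (htop : StrictMono top) (hbot : StrictMono bot)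
    (hcompl : Set.range bot = (Set.range top)ᶜ) :
    IsBallot (rowWord top) ↔ ∀ j, top (Fin.castLE hbn j) < bot j := by
  have hne : ∀ i j, top i ≠ bot j := fun i j h =>
    (hcompl ▸ Set.mem_range_self j : bot j ∈ (Set.range top)ᶜ) (h ▸ Set.mem_range_self i)
  rw [columns_lt_iff hbn htop hbot hne]
  simp only [IsBallot, prefixCount_rowWord_true htop.injective,
    prefixCount_rowWord_false hbot.injective hcompl]

lemma exists_rows_rowWord_eq {c : ℕ} (w : Fin m → Bool) (hc : prefixCount w true m = c)
    (hcb : c + b = m) :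
    ∃ (top : Fin c → Fin m) (bot : Fin b → Fin m), StrictMono top ∧ StrictMono bot ∧
      Set.range bot = (Set.range top)ᶜ ∧ rowWord top = w := by
  set S : Finset (Fin m) := {u | w u = true}
  have hS : #S = c := by simpa [prefixCount] using hc
  have hSc : #Sᶜ = b := by rw [card_compl, Fintype.card_fin]; omega
  have hrange := range_orderEmbOfFin S hS
  refine ⟨S.orderEmbOfFin hS, Sᶜ.orderEmbOfFin hSc, (S.orderEmbOfFin hS).strictMono,
    (Sᶜ.orderEmbOfFin hSc).strictMono, by rw [range_orderEmbOfFin, hrange, coe_compl], ?_⟩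
  funext u
  simp [rowWord, ← Set.mem_range, hrange, S]

end Rows

end Ballot

open Ballot

lemma range_eq_compl_range_iff {m n b : ℕ} {top : Fin n → Fin m} {bot : Fin b → Fin m} :
    Set.range bot = (Set.range top)ᶜ ↔
      (∀ i j, top i ≠ bot j) ∧ ∀ u, (∃ i, top i = u) ∨ ∃ j, bot j = u := by
  simp only [Set.ext_iff, Set.mem_range, Set.mem_compl_iff]
  constructor
  · intro h
    refine ⟨fun i j hij => (h (bot j)).mp ⟨j, rfl⟩ ⟨i, hij⟩, fun u => ?_⟩
    by_cases hu : ∃ i, top i = u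
    · exact .inl hu
    · exact .inr ((h u).mpr hu)
  · rintro ⟨hne, hcover⟩ u
    refine ⟨?_, (hcover u).resolve_left⟩
    rintro ⟨j, rfl⟩ ⟨i, hi⟩
    exact hne i j hi

lemma isSYT_iff {n d : ℕ} {top : Fin n → Fin (2 * n - d)} {bot : Fin (n - d) → Fin (2 * n - d)} :
    IsSYT n d top bot ↔ StrictMono top ∧ StrictMono bot ∧ Set.range bot = (Set.range top)ᶜ ∧
      IsBallot (rowWord top) := by
  rw [IsSYT, ← range_eq_compl_range_iff]
  constructor
  · rintro ⟨htop, hbot, hcol, hcompl⟩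
    exact ⟨htop, hbot, hcompl, (isBallot_rowWord_iff _ htop hbot hcompl).mpr hcol⟩
  · rintro ⟨htop, hbot, hcompl, hballot⟩
    exact ⟨htop, hbot, (isBallot_rowWord_iff _ htop hbot hcompl).mp hballot, hcompl⟩

theorem ncard_setOf_isSYT {n d : ℕ} (hdn : d ≤ n) :
    {pr : (Fin n → Fin (2 * n - d)) × (Fin (n - d) → Fin (2 * n - d)) |
        IsSYT n d pr.1 pr.2}.ncard = #(ballotWords (2 * n - d) n) := by
  rw [← Set.ncard_coe_finset]
  refine Set.ncard_congr (fun pr _ => rowWord pr.1) ?_ ?_ ?_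
  · rintro ⟨top, bot⟩ h
    obtain ⟨htop, -, -, hballot⟩ := isSYT_iff.mp h
    simp [ballotWords, prefixCount_rowWord_true htop.injective, hballot]
  · rintro ⟨top, bot⟩ ⟨top', bot'⟩ h h' hword
    obtain ⟨htop, hbot, hcompl, -⟩ := isSYT_iff.mp h
    obtain ⟨htop', hbot', hcompl', -⟩ := isSYT_iff.mp h'
    have hrange : Set.range top = Set.range top' := by
      ext u
      simpa [rowWord] using congrFun hword u
    exact Prod.ext ((htop.range_inj htop').mp hrange)
      ((hbot.range_inj hbot').mp (by rw [hcompl, hcompl', hrange]))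
  · intro w hw
    simp only [ballotWords, coe_filter, mem_univ, true_and, Set.mem_ofPred_eq] at hw
    obtain ⟨top, bot, htop, hbot, hcompl, rfl⟩ :=
      exists_rows_rowWord_eq (b := n - d) w hw.1 (by omega)
    exact ⟨(top, bot), isSYT_iff.mpr ⟨htop, hbot, hcompl, hw.2⟩, rfl⟩

lemma Nat.cast_choose_sub_cast_choose_succ {K : Type*} [Field K] [CharZero K] (m a : ℕ) :
    (m.choose a : K) - m.choose (a + 1) = (2 * a + 1 - m) / (a + 1) * m.choose a := by
  rcases le_or_gt a m with h | h
  · have hrec : (m.choose (a + 1) : K) * (a + 1) = m.choose a * (m - a) := by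
      have := congrArg (Nat.cast : ℕ → K) (Nat.choose_succ_right_eq m a)
      push_cast [Nat.cast_sub h] at this
      exact this
    field_simp
    linear_combination -hrec
  · simp [Nat.choose_eq_zero_of_lt h, Nat.choose_eq_zero_of_lt (h.trans (Nat.lt_succ_self a))]

/-- The number of Standard Young Tableaux of shape `(n, n-d)` is
`((d+1)/(n+1)) * C(2n-d, n)`. -/
theorem syt_two_row_count (n d : ℕ) (hdn : d ≤ n) :
    ({pr : (Fin n → Fin (2 * n - d)) × (Fin (n - d) → Fin (2 * n - d)) |
        IsSYT n d pr.1 pr.2}.ncard : ℚ)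
      = ((d + 1 : ℚ) / (n + 1)) * (Nat.choose (2 * n - d) n) := by
  have hballot : (#(ballotWords (2 * n - d) n) : ℚ) =
      (2 * n - d).choose n - (2 * n - d).choose (n + 1) := by
    rw [← card_ballotWords_add_choose (by omega)]
    push_cast
    ring
  rw [ncard_setOf_isSYT hdn, hballot, Nat.cast_choose_sub_cast_choose_succ]
  push_cast [Nat.cast_sub (by omega : d ≤ 2 * n)]
  ring
end

section
/- For n ≥ 2, the number of permutations of length n that avoid the classical pattern 123 and end with a descent equals (3/(n+1)) * C(2n-2, n). -/
/-- Number of occurrences of the classical pattern 1-2-3 in `π`. -/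
def occ123 {n : ℕ} (π : Equiv.Perm (Fin n)) : ℕ :=
  (Finset.univ.filter (fun t : Fin n × Fin n × Fin n =>
    t.1 < t.2.1 ∧ t.2.1 < t.2.2 ∧ π t.1 < π t.2.1 ∧ π t.2.1 < π t.2.2)).card

/-- Number of occurrences of the vincular pattern 1-23 in `π`. -/
def occ1_23 {n : ℕ} (π : Equiv.Perm (Fin n)) : ℕ :=
  (Finset.univ.filter (fun t : Fin n × Fin n × Fin n =>
    t.1 < t.2.1 ∧ t.2.1 < t.2.2 ∧ (t.2.2 : ℕ) = (t.2.1 : ℕ) + 1 ∧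
      π t.1 < π t.2.1 ∧ π t.2.1 < π t.2.2)).card

/-- Number of occurrences of the vincular pattern 12-3 in `π`. -/
def occ12_3 {n : ℕ} (π : Equiv.Perm (Fin n)) : ℕ :=
  (Finset.univ.filter (fun t : Fin n × Fin n × Fin n =>
    t.1 < t.2.1 ∧ t.2.1 < t.2.2 ∧ (t.2.1 : ℕ) = (t.1 : ℕ) + 1 ∧
      π t.1 < π t.2.1 ∧ π t.2.1 < π t.2.2)).card



def wfun : ℕ → ℕ → ℕ
  | 0, _ => 1
  | (l+1), c => ∑ j ∈ Finset.range (min c l + 1), wfun l j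

lemma wfun_zero (c : ℕ) : wfun 0 c = 1 := rfl

lemma wfun_succ (l c : ℕ) : wfun (l+1) c = ∑ j ∈ Finset.range (min c l + 1), wfun l j := rfl

lemma wfun_zero' : ∀ l, wfun l 0 = 1
  | 0 => rfl
  | (l+1) => by
      rw [wfun_succ]
      simp [wfun_zero' l]

lemma wfun_min (l c : ℕ) : wfun (l+1) c = wfun (l+1) (min c l) := by
  rw [wfun_succ, wfun_succ, min_eq_left (min_le_right c l)]

lemma wfun_closed : ∀ l c, c ≤ l → (l+1) * wfun l c = (l+1-c) * Nat.choose (l+c) c := by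
  intro l
  induction l with
  | zero => intro c hc; interval_cases c; simp [wfun_zero]
  | succ l ih =>
    intro c hc
    induction c with
    | zero => simp [wfun_zero']
    | succ c ihc =>
      rcases Nat.lt_or_ge (c+1) (l+1) with h | h
      · -- c + 1 ≤ l
        have hcl : c + 1 ≤ l := by omega
        have hsplit : wfun (l+1) (c+1) = wfun (l+1) c + wfun l (c+1) := by
          rw [wfun_succ (c := c+1), wfun_succ (c := c)]
          rw [min_eq_left (by omega : c + 1 ≤ l), min_eq_left (by omega : c ≤ l)]
          rw [Finset.sum_range_succ]
        have A := ihc (by omega)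
        have B := ih (c+1) hcl
        have key : Nat.choose (l+c+1) (c+1) * (c+1) = Nat.choose (l+c+1) c * (l+1) := by
          have := Nat.choose_succ_right_eq (l+c+1) c
          simpa [show l+c+1-c = l+1 by omega] using this
        have pascal : Nat.choose (l+c+2) (c+1) = Nat.choose (l+c+1) c + Nat.choose (l+c+1) (c+1) := by
          have := Nat.choose_succ_succ (l+c+1) c
          simpa [show l+c+1+1 = l+c+2 by omega] using this
        have goal' : (l+1) * ((l + 1 + 1) * wfun (l + 1) (c + 1)) =
            (l+1) * ((l + 1 + 1 - (c + 1)) * Nat.choose (l + 1 + (c + 1)) (c + 1)) := by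
          rw [hsplit, show l + 1 + (c+1) = l+c+2 by ring, pascal]
          have h1 : c ≤ l + 1 + 1 := by omega
          have h2 : c + 1 ≤ l + 1 + 1 := by omega
          have h3 : c ≤ l + 1 := by omega
          have h4 : c + 1 ≤ l + 1 := by omega
          zify [h1, h2, h3, h4] at A B key ⊢
          rw [show l + 1 + c = l + c + 1 by ring] at A
          rw [show l + (c+1) = l + c + 1 by ring] at B
          linear_combination ((l:ℤ)+1) * A + ((l:ℤ)+2) * B - key
        exact Nat.eq_of_mul_eq_mul_left (by omega) goal'
      · -- c = l
        have hcl : c = l := by omega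
        subst hcl
        have hstab : wfun (c+1) (c+1) = wfun (c+1) c := by
          rw [wfun_min (c := c+1)]; simp
        have A := ihc (by omega)
        rw [hstab]
        have sym : Nat.choose (2*c+1) (c+1) = Nat.choose (2*c+1) c := by
          rw [← Nat.choose_symm (by omega : c+1 ≤ 2*c+1)]
          congr 1; omega
        have pascal : Nat.choose (2*c+2) (c+1) = Nat.choose (2*c+1) c + Nat.choose (2*c+1) (c+1) := by
          have := Nat.choose_succ_succ (2*c+1) c
          simpa [show 2*c+1+1 = 2*c+2 by omega] using this
        rw [show c+1+1-(c+1) = 1 by omega, show c+1+(c+1) = 2*c+2 by ring, pascal, sym]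
        rw [show c+1+1-c = 2 by omega, show c+1+c = 2*c+1 by ring] at A
        omega



def Wset : ℕ → ℕ → Finset (List ℕ)
  | 0, _ => {[]}
  | (l+1), c => (Finset.range (min c l + 1)).biUnion (fun j => (Wset l j).image (List.cons j))


lemma card_Wset : ∀ l c, (Wset l c).card = wfun l c := by
  intro l
  induction l with
  | zero => intro c; rfl
  | succ l ih =>
    intro c
    show ((Finset.range (min c l + 1)).biUnion _).card = _
    rw [Finset.card_biUnion]
    · simp only [Finset.card_image_of_injective _ (List.cons_injective)]
      simp [wfun, ih]
    · intro x _ y _ hxy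
      simp only [Finset.disjoint_left]
      intro a ha hb
      simp only [Finset.mem_image] at ha hb
      obtain ⟨t, _, rfl⟩ := ha
      obtain ⟨s, _, h2⟩ := hb
      have : y = x := by injection h2
      exact hxy this.symm

lemma mem_Wset : ∀ l c xs, xs ∈ Wset l c ↔
    xs.length = l ∧ List.Pairwise (· ≥ ·) xs ∧ ∀ i < l, xs.getD i 0 ≤ min c (l - 1 - i) := by
  intro l
  induction l with
  | zero =>
    intro c xs
    constructor
    · intro h
      have : xs = [] := by simpa [Wset] using h
      subst this; simp
    · intro ⟨h1, _, _⟩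
      rw [List.length_eq_zero_iff] at h1
      subst h1; simp [Wset]
  | succ l ih =>
    intro c xs
    constructor
    · intro h
      simp only [Wset, Finset.mem_biUnion, Finset.mem_range, Finset.mem_image] at h
      obtain ⟨j, hj, t, ht, rfl⟩ := h
      rw [ih] at ht
      obtain ⟨hlen, hpw, hbd⟩ := ht
      have hjc : j ≤ min c l := by omega
      refine ⟨by simp [hlen], ?_, ?_⟩
      · rw [List.pairwise_cons]
        refine ⟨fun a hat => ?_, hpw⟩
        obtain ⟨i, hi, rfl⟩ := List.mem_iff_get.mp hat
        have := hbd i (by omega)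
        rw [List.getD_eq_getElem _ _ (by omega)] at this
        simp only [List.get_eq_getElem]
        omega
      · intro i hi
        match i with
        | 0 => simpa using by omega
        | (i+1) =>
          rw [List.getD_cons_succ]
          rcases Nat.lt_or_ge i l with h' | h'
          · have := hbd i h'
            have : t.getD i 0 ≤ min j (l - 1 - i) := this
            omega
          · rw [List.getD_eq_default _ _ (by omega)]
            omega
    · intro ⟨hlen, hpw, hbd⟩
      match xs with
      | [] => simp at hlen
      | (j :: t) =>
        simp only [List.length_cons] at hlen
        simp only [Wset, Finset.mem_biUnion, Finset.mem_range, Finset.mem_image]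
        have hj0 : j ≤ min c l := by
          have := hbd 0 (by omega)
          simpa using this
        refine ⟨j, by omega, t, ?_, rfl⟩
        rw [ih]
        rw [List.pairwise_cons] at hpw
        refine ⟨by omega, hpw.2, ?_⟩
        intro i hi
        have hb := hbd (i+1) (by omega)
        rw [List.getD_cons_succ] at hb
        have hmem : t.getD i 0 ∈ t := by
          rw [List.getD_eq_getElem _ _ (by omega)]
          exact List.getElem_mem _
        have := hpw.1 _ hmem
        omega


def AscP (m : ℕ) (xs : List ℕ) : Prop :=
  xs.getD m 0 = 0 ∧ (m = 0 ∨ 1 ≤ xs.getD (m-1) 0)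

instance (m : ℕ) : DecidablePred (AscP m) := fun xs => by unfold AscP; infer_instance

lemma mem_Wset_elem {l c : ℕ} {xs : List ℕ} (h : xs.length = l) :
    xs ∈ Wset l c ↔
      (∀ i j (hi : i < l) (hj : j < l), i < j → xs[j]'(by omega) ≤ xs[i]'(by omega)) ∧
      (∀ i (hi : i < l), xs[i]'(by omega) ≤ min c (l - 1 - i)) := by
  rw [mem_Wset]
  have hg : ∀ i (hi : i < l), xs.getD i 0 = xs[i]'(by omega) :=
    fun i hi => List.getD_eq_getElem _ _ (by omega)
  constructor
  · rintro ⟨-, hpw, hbd⟩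
    rw [List.pairwise_iff_getElem] at hpw
    exact ⟨fun i j hi hj hij => hpw i j (by omega) (by omega) hij,
      fun i hi => by rw [← hg i hi]; exact hbd i hi⟩
  · rintro ⟨hpw, hbd⟩
    refine ⟨h, ?_, fun i hi => by rw [hg i hi]; exact hbd i hi⟩
    rw [List.pairwise_iff_getElem]
    intro i j hi hj hij
    exact hpw i j (by omega) (by omega) hij

lemma card_asc (m : ℕ) :
    ((Wset (m+2) (m+1)).filter (AscP m)).card = wfun (m+1) m := by
  rw [← card_Wset]
  apply Finset.card_bij
    (i := fun xs _ => List.ofFn (fun i : Fin (m+1) => if (i:ℕ) < m then xs.getD i 0 - 1 else 0))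
  · -- maps into
    intro xs hxs
    simp only [Finset.mem_filter] at hxs
    obtain ⟨hxs, hasc⟩ := hxs
    have hlen : xs.length = m + 2 := ((mem_Wset _ _ _).mp hxs).1
    rw [mem_Wset_elem hlen] at hxs
    obtain ⟨hpw, hbd⟩ := hxs
    have hg : ∀ i (hi : i < m + 2), xs.getD i 0 = xs[i]'(by omega) :=
      fun i hi => List.getD_eq_getElem _ _ (by omega)
    rw [mem_Wset_elem (by simp)]
    constructor
    · intro i j hi hj hij
      simp only [List.getElem_ofFn, Fin.val_mk]
      by_cases hjm : j < m
      · rw [if_pos hjm, if_pos (show i < m by omega), hg i (by omega), hg j (by omega)]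
        have := hpw i j (by omega) (by omega) hij
        omega
      · rw [if_neg hjm]; omega
    · intro i hi
      simp only [List.getElem_ofFn, Fin.val_mk]
      by_cases him : i < m
      · rw [if_pos him, hg i (by omega)]
        have := hbd i (by omega)
        omega
      · rw [if_neg him]; omega
  · -- injective
    intro xs hxs ys hys heq
    simp only [Finset.mem_filter] at hxs hys
    obtain ⟨hxs, hascx⟩ := hxs
    obtain ⟨hys, hascy⟩ := hys
    have hlenx : xs.length = m + 2 := ((mem_Wset _ _ _).mp hxs).1
    have hleny : ys.length = m + 2 := ((mem_Wset _ _ _).mp hys).1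
    rw [mem_Wset_elem hlenx] at hxs
    rw [mem_Wset_elem hleny] at hys
    obtain ⟨hpwx, hbdx⟩ := hxs
    obtain ⟨hpwy, hbdy⟩ := hys
    have hgx : ∀ i (hi : i < m + 2), xs.getD i 0 = xs[i]'(by omega) :=
      fun i hi => List.getD_eq_getElem _ _ (by omega)
    have hgy : ∀ i (hi : i < m + 2), ys.getD i 0 = ys[i]'(by omega) :=
      fun i hi => List.getD_eq_getElem _ _ (by omega)
    have tailx : ∀ i (h : i < m+2), m ≤ i → xs[i]'(by omega) = 0 := by
      intro i h him
      rcases Nat.eq_or_lt_of_le him with h' | h'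
      · subst h'
        have := hascx.1
        rwa [hgx _ (by omega)] at this
      · have hb := hbdx i (by omega)
        omega
    have taily : ∀ i (h : i < m+2), m ≤ i → ys[i]'(by omega) = 0 := by
      intro i h him
      rcases Nat.eq_or_lt_of_le him with h' | h'
      · subst h'
        have := hascy.1
        rwa [hgy _ (by omega)] at this
      · have hb := hbdy i (by omega)
        omega
    have headx : ∀ i (hi : i < m), 1 ≤ xs[i]'(by omega) := by
      intro i hi
      rcases hascx.2 with h' | h'
      · omega
      · rw [hgx (m-1) (by omega)] at h'
        rcases Nat.lt_or_ge i (m-1) with h'' | h''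
        · have := hpwx i (m-1) (by omega) (by omega) h''
          omega
        · have hieq : i = m - 1 := by omega
          subst hieq; omega
    have heady : ∀ i (hi : i < m), 1 ≤ ys[i]'(by omega) := by
      intro i hi
      rcases hascy.2 with h' | h'
      · omega
      · rw [hgy (m-1) (by omega)] at h'
        rcases Nat.lt_or_ge i (m-1) with h'' | h''
        · have := hpwy i (m-1) (by omega) (by omega) h''
          omega
        · have hieq : i = m - 1 := by omega
          subst hieq; omega
    apply List.ext_getElem (by omega)
    intro i hix hiy
    have hi2 : i < m + 2 := by omega
    by_cases him : i < m
    · have h0 := List.getElem_of_eq heq (show i < _ by simp; omega)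
      simp only [List.getElem_ofFn, Fin.val_mk, if_pos him] at h0
      rw [hgx i (by omega), hgy i (by omega)] at h0
      have h1 := headx i him
      have h2 := heady i him
      omega
    · rw [tailx i hi2 (by omega), taily i hi2 (by omega)]
  · -- surjective
    intro ys hys
    have hlen : ys.length = m + 1 := ((mem_Wset _ _ _).mp hys).1
    rw [mem_Wset_elem hlen] at hys
    obtain ⟨hpw, hbd⟩ := hys
    have hgy : ∀ i (hi : i < m + 1), ys.getD i 0 = ys[i]'(by omega) :=
      fun i hi => List.getD_eq_getElem _ _ (by omega)
    refine ⟨List.ofFn (fun i : Fin (m+2) => if (i:ℕ) < m then ys.getD i 0 + 1 else 0), ?_, ?_⟩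
    · simp only [Finset.mem_filter]
      constructor
      · rw [mem_Wset_elem (by simp)]
        constructor
        · intro i j hi hj hij
          simp only [List.getElem_ofFn, Fin.val_mk]
          by_cases hjm : j < m
          · rw [if_pos hjm, if_pos (show i < m by omega), hgy i (by omega), hgy j (by omega)]
            have := hpw i j (by omega) (by omega) hij
            omega
          · rw [if_neg hjm]; omega
        · intro i hi
          simp only [List.getElem_ofFn, Fin.val_mk]
          by_cases him : i < m
          · rw [if_pos him, hgy i (by omega)]
            have := hbd i (by omega)
            omega
          · rw [if_neg him]; omega
      · constructor
        · rw [List.getD_eq_getElem _ _ (by simp)]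
          simp only [List.getElem_ofFn, Fin.val_mk]
          simp
        · rcases Nat.eq_zero_or_pos m with h | h
          · exact Or.inl h
          · refine Or.inr ?_
            rw [List.getD_eq_getElem _ _ (by simp; omega)]
            simp only [List.getElem_ofFn, Fin.val_mk]
            rw [if_pos (by omega)]
            omega
    · apply List.ext_getElem (by simp; omega)
      intro i hi1 hi2
      simp only [List.length_ofFn] at hi1
      simp only [List.getElem_ofFn, Fin.val_mk]
      by_cases him : i < m
      · rw [if_pos him]
        rw [List.getD_eq_getElem _ _ (by simp; omega)]
        simp only [List.getElem_ofFn, Fin.val_mk, if_pos him]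
        rw [hgy i (by omega)]
        omega
      · rw [if_neg him]
        have := hbd i (by omega)
        omega


variable {n : ℕ}

/-- padded values of the permutation -/
def pf (π : Equiv.Perm (Fin n)) : ℕ → ℕ := fun i => if h : i < n then (π ⟨i, h⟩ : ℕ) else 0

/-- running minimum -/
def rm (π : Equiv.Perm (Fin n)) (i : ℕ) : ℕ :=
  (Finset.range (i+1)).inf' (by simp) (pf π)

def NoInc (π : Equiv.Perm (Fin n)) : Prop :=
  ∀ i j k, i < j → j < k → k < n → ¬(pf π i < pf π j ∧ pf π j < pf π k)

lemma pf_lt (π : Equiv.Perm (Fin n)) {i : ℕ} (h : i < n) : pf π i < n := by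
  simp only [pf, dif_pos h]; exact (π ⟨i, h⟩).isLt

lemma pf_inj (π : Equiv.Perm (Fin n)) {i j : ℕ} (hi : i < n) (hj : j < n)
    (h : pf π i = pf π j) : i = j := by
  simp only [pf, dif_pos hi, dif_pos hj] at h
  have := π.injective (Fin.val_injective h)
  simpa using congrArg Fin.val this

lemma pf_surj (π : Equiv.Perm (Fin n)) {v : ℕ} (hv : v < n) : ∃ i, i < n ∧ pf π i = v := by
  refine ⟨(π.symm ⟨v, hv⟩ : Fin n), (π.symm ⟨v, hv⟩).isLt, ?_⟩
  simp only [pf, dif_pos (π.symm ⟨v, hv⟩).isLt]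
  simp

lemma rm_le (π : Equiv.Perm (Fin n)) {j i : ℕ} (h : j ≤ i) : rm π i ≤ pf π j :=
  Finset.inf'_le _ (by simp [Nat.lt_succ]; omega)

lemma exists_rm (π : Equiv.Perm (Fin n)) (i : ℕ) : ∃ j, j ≤ i ∧ pf π j = rm π i := by
  obtain ⟨j, hj, h⟩ := Finset.exists_mem_eq_inf' (by simp : (Finset.range (i+1)).Nonempty) (pf π)
  exact ⟨j, by simp at hj; omega, h.symm⟩

lemma rm_anti (π : Equiv.Perm (Fin n)) {i j : ℕ} (h : i ≤ j) : rm π j ≤ rm π i := by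
  obtain ⟨t, ht, hte⟩ := exists_rm π i
  rw [← hte]
  exact rm_le π (le_trans ht h)

lemma rm_zero (π : Equiv.Perm (Fin n)) : rm π 0 = pf π 0 := by
  simp [rm]

lemma rm_succ (π : Equiv.Perm (Fin n)) (i : ℕ) :
    rm π (i+1) = min (rm π i) (pf π (i+1)) := by
  apply le_antisymm
  · exact le_min (rm_anti π (by omega)) (rm_le π le_rfl)
  · unfold rm
    rw [Finset.le_inf'_iff]
    intro j hj
    simp only [Finset.mem_range] at hj
    rcases Nat.lt_or_ge j (i+1) with h' | h'
    · exact le_trans (min_le_left _ _) (rm_le π (by omega))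
    · have : j = i + 1 := by omega
      subst this
      exact min_le_right _ _

lemma rm_bd [NeZero n] (π : Equiv.Perm (Fin n)) {i : ℕ} (h : i < n) : rm π i ≤ n - 1 - i := by
  have hcard : ((Finset.range (i+1)).image (pf π)).card = i + 1 := by
    rw [Finset.card_image_of_injOn, Finset.card_range]
    intro a ha b hb hab
    simp only [Finset.mem_coe, Finset.mem_range] at ha hb
    exact pf_inj π (by omega) (by omega) hab
  have hsub : (Finset.range (i+1)).image (pf π) ⊆ Finset.Icc (rm π i) (n-1) := by
    intro x hx
    simp only [Finset.mem_image, Finset.mem_range] at hx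
    obtain ⟨j, hj, rfl⟩ := hx
    rw [Finset.mem_Icc]
    exact ⟨rm_le π (by omega), by have := pf_lt π (show j < n by omega); omega⟩
  have := Finset.card_le_card hsub
  rw [hcard, Nat.card_Icc] at this
  omega

lemma rm_last [NeZero n] (π : Equiv.Perm (Fin n)) : rm π (n-1) = 0 := by
  obtain ⟨i, hi, hv⟩ := pf_surj π (Nat.pos_of_ne_zero (NeZero.ne n))
  have := rm_le π (show i ≤ n - 1 by omega)
  omega

/-- If there is an earlier smaller value at i, everything after i is smaller. -/
lemma later_lt {π : Equiv.Perm (Fin n)} (hav : NoInc π) {t i j : ℕ}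
    (ht : t < i) (h : pf π t < pf π i) (hij : i < j) (hj : j < n) : pf π j < pf π i := by
  rcases Nat.lt_trichotomy (pf π i) (pf π j) with h' | h' | h'
  · exact absurd ⟨h, h'⟩ (hav t i j ht hij hj)
  · exact absurd (pf_inj π (by omega) hj h') (by omega)
  · exact h'

/-- at a non-drop position there is an earlier smaller value -/
lemma nondrop_smaller (π : Equiv.Perm (Fin n)) {i : ℕ} (hi1 : 1 ≤ i) (hi : i < n)
    (h : rm π i = rm π (i-1)) : ∃ t, t < i ∧ pf π t < pf π i := by
  obtain ⟨t, ht, hte⟩ := exists_rm π (i-1)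
  refine ⟨t, by omega, ?_⟩
  have h1 : rm π i ≤ pf π i := rm_le π le_rfl
  have h2 : pf π t ≠ pf π i := fun he => by
    have := pf_inj π (by omega) hi he; omega
  omega

lemma drop_eq (π : Equiv.Perm (Fin n)) {i : ℕ} (hi1 : 1 ≤ i)
    (h : rm π i < rm π (i-1)) : pf π i = rm π i := by
  have := rm_succ π (i-1)
  rw [show i - 1 + 1 = i by omega] at this
  omega

/-- injectivity: an avoider is determined by its running minima -/
lemma rm_injective {π σ : Equiv.Perm (Fin n)} (havπ : NoInc π) (havσ : NoInc σ)
    (h : ∀ i, i < n → rm π i = rm σ i) : π = σ := by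
  have key : ∀ i, i < n → pf π i = pf σ i := by
    intro i
    induction i using Nat.strong_induction_on with
    | _ i IH =>
      intro hi
      rcases Nat.eq_zero_or_pos i with rfl | hpos
      · have := h 0 hi
        rwa [rm_zero, rm_zero] at this
      · rcases Nat.lt_or_ge (rm π i) (rm π (i-1)) with hd | hd
        · rw [drop_eq π hpos hd, drop_eq σ hpos (by rw [← h i hi, ← h (i-1) (by omega)]; exact hd),
            h i hi]
        · have hndπ : rm π i = rm π (i-1) := le_antisymm (rm_anti π (by omega)) hd
          have hndσ : rm σ i = rm σ (i-1) := by
            rw [← h i hi, ← h (i-1) (by omega)]; exact hndπ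
          obtain ⟨tπ, htπ, htπ'⟩ := nondrop_smaller π hpos hi hndπ
          obtain ⟨tσ, htσ, htσ'⟩ := nondrop_smaller σ hpos hi hndσ
          have h1 : pf σ i ≤ pf π i := by
            obtain ⟨s, hs, hse⟩ := pf_surj π (pf_lt σ hi)
            rcases Nat.lt_trichotomy s i with h' | rfl | h'
            · rw [IH s h' (by omega)] at hse
              have := pf_inj σ (by omega) hi hse
              omega
            · omega
            · have := later_lt havπ htπ htπ' h' hs
              omega
          have h2 : pf π i ≤ pf σ i := by
            obtain ⟨s, hs, hse⟩ := pf_surj σ (pf_lt π hi)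
            rcases Nat.lt_trichotomy s i with h' | rfl | h'
            · rw [← IH s h' (by omega)] at hse
              have := pf_inj π (by omega) hi hse
              omega
            · omega
            · have := later_lt havσ htσ htσ' h' hs
              omega
          omega
  apply Equiv.ext
  intro x
  have := key x.val x.isLt
  simp only [pf, dif_pos x.isLt] at this
  apply Fin.val_injective
  simpa using this

/-- ascent at the end iff the rm-condition -/
lemma asc_iff {π : Equiv.Perm (Fin n)} (hn : 2 ≤ n) (hav : NoInc π) :
    pf π (n-2) < pf π (n-1) ↔ (rm π (n-2) = 0 ∧ (n = 2 ∨ 1 ≤ rm π (n-3))) := by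
  have : NeZero n := ⟨by omega⟩
  constructor
  · intro hasc
    have h0 : rm π (n-2) = 0 := by
      by_contra hne
      have hlast : rm π (n-1) = 0 := rm_last π
      have hd : rm π (n-1) < rm π (n-2) := by
        have := rm_anti π (show n-2 ≤ n-1 by omega)
        omega
      have := drop_eq π (show 1 ≤ n-1 by omega) (by rw [show n-1-1 = n-2 by omega]; exact hd)
      omega
    refine ⟨h0, ?_⟩
    rcases Nat.eq_or_lt_of_le hn with h2 | h3
    · exact Or.inl h2.symm
    · refine Or.inr ?_
      by_contra hc
      have h3' : rm π (n-3) = 0 := by omega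
      have hnd : rm π (n-2) = rm π (n-2-1) := by
        rw [show n-2-1 = n-3 by omega]; omega
      obtain ⟨t, ht, ht'⟩ := nondrop_smaller π (by omega) (by omega) hnd
      have := later_lt hav ht ht' (show n-2 < n-1 by omega) (by omega)
      omega
  · intro ⟨h0, hor⟩
    have hp2 : pf π (n-2) = 0 := by
      rcases hor with h2 | h3
      · have : rm π 0 = pf π 0 := rm_zero π
        have h22 : n - 2 = 0 := by omega
        rw [h22]
        rw [h22] at h0
        omega
      · have hd : rm π (n-2) < rm π (n-2-1) := by
          rw [show n-2-1 = n-3 by omega]; omega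
        rcases Nat.eq_or_lt_of_le hn with h2 | hgt
        · have h22 : n - 2 = 0 := by omega
          rw [h22] at h0 ⊢
          rw [rm_zero] at h0
          exact h0
        · have := drop_eq π (show 1 ≤ n-2 by omega) hd
          omega
    have hne : pf π (n-1) ≠ pf π (n-2) := fun he => by
      have := pf_inj π (by omega) (by omega) he
      omega
    omega

/-! ### Construction of an avoider from a running-min sequence -/

def bused (n : ℕ) (m : ℕ → ℕ) : ℕ → Finset ℕ
  | 0 => ∅
  | (i+1) => insert
      (if i = 0 ∨ m i < m (i-1) then m i else ((Finset.range n) \ bused n m i).max.getD 0)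
      (bused n m i)

def bv (n : ℕ) (m : ℕ → ℕ) (i : ℕ) : ℕ :=
  if i = 0 ∨ m i < m (i-1) then m i else ((Finset.range n) \ bused n m i).max.getD 0

lemma bused_succ (n : ℕ) (m : ℕ → ℕ) (i : ℕ) :
    bused n m (i+1) = insert (bv n m i) (bused n m i) := rfl

lemma max_getD_spec {s : Finset ℕ} (hs : s.Nonempty) :
    s.max.getD 0 ∈ s ∧ ∀ x ∈ s, x ≤ s.max.getD 0 := by
  have h := Finset.coe_max' hs
  constructor
  · rw [← h]; exact Finset.max'_mem s hs
  · intro x hx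
    rw [← h]
    exact Finset.le_max' s x hx


lemma inf'_range_succ (f : ℕ → ℕ) (i : ℕ) (hi : 0 < i) :
    (Finset.range (i+1)).inf' (by simp) f
      = min ((Finset.range i).inf' (by simp; omega) f) (f i) := by
  apply le_antisymm
  · apply le_min
    · rw [Finset.le_inf'_iff]
      intro j hj
      exact Finset.inf'_le _ (by simp at hj ⊢; omega)
    · exact Finset.inf'_le _ (by simp)
  · rw [Finset.le_inf'_iff]
    intro j hj
    simp only [Finset.mem_range] at hj
    rcases Nat.lt_or_ge j i with h' | h'
    · exact le_trans (min_le_left _ _) (Finset.inf'_le _ (by simp; omega))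
    · have : j = i := by omega
      subst this
      exact min_le_right _ _


lemma inf'_range_congr (f : ℕ → ℕ) {a b : ℕ} (h : a = b)
    (ha : (Finset.range a).Nonempty) (hb : (Finset.range b).Nonempty) :
    (Finset.range a).inf' ha f = (Finset.range b).inf' hb f := by subst h; rfl

/-- the big invariant -/
lemma binv (n : ℕ) (m : ℕ → ℕ) (hanti : ∀ i j, i ≤ j → j < n → m j ≤ m i)
    (hbd : ∀ i, i < n → m i ≤ n - 1 - i) :
    ∀ i, i ≤ n →
      (bused n m i = (Finset.range i).image (bv n m)) ∧
      (∀ j, j < i → bv n m j < n) ∧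
      (∀ j k, j < k → k < i → bv n m j ≠ bv n m k) ∧
      (∀ j, j < i → (Finset.range (j+1)).inf' (by simp) (bv n m) = m j) ∧
      (∀ j, j < i → ¬(j = 0 ∨ m j < m (j-1)) → m j < bv n m j) := by
  intro i
  induction i with
  | zero => exact fun _ => ⟨rfl, by omega, by omega, by omega, by omega⟩
  | succ i IH =>
    intro hin
    obtain ⟨h1, h2, h3, h4, h5⟩ := IH (by omega)
    have hcard : (bused n m i).card = i := by
      rw [h1, Finset.card_image_of_injOn, Finset.card_range]
      intro a ha b hb hab
      simp only [Finset.mem_coe, Finset.mem_range] at ha hb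
      rcases Nat.lt_trichotomy a b with h | h | h
      · exact absurd hab (h3 a b h hb)
      · exact h
      · exact absurd hab.symm (h3 b a h ha)
    have hbv_ge : ∀ j, j < i → m j ≤ bv n m j := by
      intro j hj
      have := h4 j hj
      rw [← this]
      exact Finset.inf'_le _ (by simp)
    -- new value facts
    have hmain : bv n m i < n ∧ (∀ j, j < i → bv n m j ≠ bv n m i) ∧
        ((Finset.range (i+1)).inf' (by simp) (bv n m) = m i) ∧
        (¬(i = 0 ∨ m i < m (i-1)) → m i < bv n m i) := by
      by_cases hdrop : i = 0 ∨ m i < m (i-1)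
      · have hb : bv n m i = m i := if_pos hdrop
        have hblt : bv n m i < n := by
          rw [hb]; have := hbd i (by omega); omega
        have hnew : ∀ j, j < i → bv n m j ≠ bv n m i := by
          intro j hj
          have hi1 : i ≠ 0 := by omega
          have hd : m i < m (i-1) := by tauto
          have := hbv_ge j hj
          have := hanti j (i-1) (by omega) (by omega)
          omega
        refine ⟨hblt, hnew, ?_, by tauto⟩
        rcases Nat.eq_zero_or_pos i with rfl | hpos
        · simp [hb]
        · rw [inf'_range_succ _ _ hpos, hb]
          have hprev : (Finset.range i).inf' (by simp; omega) (bv n m) = m (i-1) :=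
            (inf'_range_congr _ (show i = i-1+1 by omega) _ _).trans (h4 (i-1) (by omega))
          rw [hprev]
          have : m i ≤ m (i-1) := hanti (i-1) i (by omega) (by omega)
          omega
      · -- non-drop
        have hi1 : i ≠ 0 := by tauto
        have hmeq : m i = m (i-1) := by
          have := hanti (i-1) i (by omega) (by omega)
          omega
        set s := (Finset.range n) \ bused n m i with hs_def
        have hs_ne : s.Nonempty := by
          have : (Finset.range n).card - (bused n m i).card ≤ s.card := Finset.le_card_sdiff _ _
          rw [Finset.card_range, hcard] at this
          rw [← Finset.card_pos]
          omega
        have hb : bv n m i = s.max.getD 0 := if_neg hdrop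
        obtain ⟨hmem, hmax⟩ := max_getD_spec hs_ne
        have hblt : bv n m i < n := by
          rw [hb]
          have := Finset.mem_sdiff.mp hmem
          simpa using this.1
        have hnotused : bv n m i ∉ bused n m i := by
          rw [hb]
          exact (Finset.mem_sdiff.mp hmem).2
        have hnew : ∀ j, j < i → bv n m j ≠ bv n m i := by
          intro j hj he
          apply hnotused
          rw [h1, ← he]
          exact Finset.mem_image_of_mem _ (Finset.mem_range.mpr hj)
        -- m i is already used
        have hmused : m i ∈ bused n m i := by
          obtain ⟨t, ht, hte⟩ := Finset.exists_mem_eq_inf'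
            (show (Finset.range (i-1+1)).Nonempty by simp) (bv n m)
          have h4' := h4 (i-1) (by omega)
          rw [h4', ← hmeq] at hte
          rw [h1, hte]
          exact Finset.mem_image_of_mem _ (by simp at ht ⊢; omega)
        -- there is an unused value above m i
        have hgt : m i < bv n m i := by
          by_contra hle
          -- then all values in (m i, n) are used
          have hall : Finset.Ico (m i + 1) n ⊆ bused n m i := by
            intro x hx
            rw [Finset.mem_Ico] at hx
            by_contra hxu
            have hxs : x ∈ s := Finset.mem_sdiff.mpr ⟨Finset.mem_range.mpr hx.2, hxu⟩
            have := hmax x hxs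
            rw [← hb] at this
            omega
          have hsubcard : (Finset.Ico (m i + 1) n).card ≤ (bused n m i \ {m i}).card := by
            apply Finset.card_le_card
            intro x hx
            rw [Finset.mem_sdiff, Finset.mem_singleton]
            refine ⟨hall hx, ?_⟩
            rw [Finset.mem_Ico] at hx
            omega
          rw [Nat.card_Ico] at hsubcard
          have hkick : (bused n m i \ {m i}).card = i - 1 := by
            rw [Finset.card_sdiff_of_subset (by simpa using hmused), hcard]
            simp
          have := hbd i (by omega)
          omega
        refine ⟨hblt, hnew, ?_, fun _ => hgt⟩
        rw [inf'_range_succ _ _ (by omega)]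
        have hprev : (Finset.range i).inf' (by simp; omega) (bv n m) = m (i-1) :=
          (inf'_range_congr _ (show i = i-1+1 by omega) _ _).trans (h4 (i-1) (by omega))
        rw [hprev]
        omega
    obtain ⟨hblt, hnew, hinf, hgt⟩ := hmain
    refine ⟨?_, ?_, ?_, ?_, ?_⟩
    · rw [bused_succ, h1, Finset.range_add_one, Finset.image_insert]
    · intro j hj
      rcases Nat.lt_or_ge j i with h | h
      · exact h2 j h
      · have : j = i := by omega
        subst this; exact hblt
    · intro j k hjk hk
      rcases Nat.lt_or_ge k i with h | h
      · exact h3 j k hjk h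
      · have : k = i := by omega
        subst this
        exact hnew j hjk
    · intro j hj
      rcases Nat.lt_or_ge j i with h | h
      · exact h4 j h
      · have : j = i := by omega
        subst this; exact hinf
    · intro j hj hnd
      rcases Nat.lt_or_ge j i with h | h
      · exact h5 j h hnd
      · have : j = i := by omega
        subst this; exact hgt hnd

/-- build the permutation -/
lemma exists_perm (n : ℕ) (hn : 1 ≤ n) (m : ℕ → ℕ) (hanti : ∀ i j, i ≤ j → j < n → m j ≤ m i)
    (hbd : ∀ i, i < n → m i ≤ n - 1 - i) :
    ∃ π : Equiv.Perm (Fin n), NoInc π ∧ ∀ i, i < n → rm π i = m i := by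
  obtain ⟨h1, h2, h3, h4, h5⟩ := binv n m hanti hbd n le_rfl
  have hbv_ge : ∀ j, j < n → m j ≤ bv n m j := by
    intro j hj
    have := h4 j hj
    rw [← this]
    exact Finset.inf'_le _ (by simp)
  have hinj : Function.Injective (fun i : Fin n => (⟨bv n m i, h2 i i.isLt⟩ : Fin n)) := by
    intro a b hab
    simp only [Fin.mk.injEq] at hab
    apply Fin.val_injective
    rcases Nat.lt_trichotomy a.val b.val with h | h | h
    · exact absurd hab (h3 _ _ h b.isLt)
    · exact h
    · exact absurd hab.symm (h3 _ _ h a.isLt)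
  obtain ⟨π, hπ⟩ : ∃ π : Equiv.Perm (Fin n), ∀ i : Fin n, π i = ⟨bv n m i, h2 i i.isLt⟩ :=
    ⟨Equiv.ofBijective _ (Finite.injective_iff_bijective.mp hinj), fun i => rfl⟩
  have hpf : ∀ i, i < n → pf π i = bv n m i := by
    intro i hi
    simp only [pf, dif_pos hi, hπ]
  have hrm : ∀ i, i < n → rm π i = m i := by
    intro i hi
    rw [rm, ← h4 i hi]
    apply Finset.inf'_congr _ rfl
    intro j hj
    simp only [Finset.mem_range] at hj
    exact hpf j (by omega)
  refine ⟨π, ?_, hrm⟩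
  intro i j k hij hjk hk hcon
  rw [hpf i (by omega), hpf j (by omega), hpf k (by omega)] at hcon
  by_cases hdrop : j = 0 ∨ m j < m (j-1)
  · -- bv j = m j, and bv i ≥ m i ≥ m (j-1) > m j
    have hj0 : j ≠ 0 := by omega
    have hd : m j < m (j-1) := by tauto
    have hbj : bv n m j = m j := if_pos hdrop
    have := hbv_ge i (by omega)
    have := hanti i (j-1) (by omega) (by omega)
    omega
  · -- bv j is max of unused, bv k unused at j
    have hbj : bv n m j = ((Finset.range n) \ bused n m j).max.getD 0 := if_neg hdrop
    obtain ⟨hj1, _, _, _, _⟩ := binv n m hanti hbd j (by omega)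
    have hkj : bv n m k ∈ (Finset.range n) \ bused n m j := by
      rw [Finset.mem_sdiff, hj1, Finset.mem_image]
      constructor
      · simp only [Finset.mem_range]
        exact h2 k hk
      · rintro ⟨t, ht, hte⟩
        simp only [Finset.mem_range] at ht
        exact h3 t k (by omega) hk hte
    have hs_ne : ((Finset.range n) \ bused n m j).Nonempty := ⟨_, hkj⟩
    obtain ⟨-, hmax⟩ := max_getD_spec hs_ne
    have := hmax _ hkj
    rw [← hbj] at this
    omega

lemma occ123_zero_iff {n : ℕ} (π : Equiv.Perm (Fin n)) : occ123 π = 0 ↔ NoInc π := by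
  rw [occ123, Finset.card_eq_zero, Finset.filter_eq_empty_iff]
  constructor
  · intro h i j k hij hjk hk hcon
    have hi : i < n := by omega
    have hj : j < n := by omega
    have := h (x := (⟨i, hi⟩, ⟨j, hj⟩, ⟨k, hk⟩)) (Finset.mem_univ _)
    apply this
    simp only [pf, dif_pos hi, dif_pos hj, dif_pos hk] at hcon
    exact ⟨Fin.mk_lt_mk.mpr hij, Fin.mk_lt_mk.mpr hjk,
      Fin.lt_def.mpr hcon.1, Fin.lt_def.mpr hcon.2⟩
  · intro h t _ hcon
    obtain ⟨h1, h2, h3, h4⟩ := hcon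
    apply h t.1 t.2.1 t.2.2 h1 h2 t.2.2.isLt
    simp only [pf, dif_pos t.1.isLt, dif_pos t.2.1.isLt, dif_pos t.2.2.isLt]
    exact ⟨Fin.lt_def.mp h3, Fin.lt_def.mp h4⟩

lemma main_bij (m : ℕ) :
    (Finset.univ.filter (fun π : Equiv.Perm (Fin (m+2)) =>
        occ123 π = 0 ∧ π ⟨m+1, by omega⟩ < π ⟨m, by omega⟩)).card
      = ((Wset (m+2) (m+1)).filter (fun xs => ¬ AscP m xs)).card := by
  have hNZ : NeZero (m+2) := ⟨by omega⟩
  -- useful translations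
  have hpf1 : ∀ π : Equiv.Perm (Fin (m+2)), pf π (m+1) = (π ⟨m+1, by omega⟩ : ℕ) := by
    intro π; simp [pf]
  have hpf2 : ∀ π : Equiv.Perm (Fin (m+2)), pf π m = (π ⟨m, by omega⟩ : ℕ) := by
    intro π; simp only [pf, dif_pos (show m < m+2 by omega)]
  have hasc : ∀ π : Equiv.Perm (Fin (m+2)), NoInc π →
      ((π ⟨m+1, by omega⟩ < π ⟨m, by omega⟩) ↔
        ¬ (rm π m = 0 ∧ (m = 0 ∨ 1 ≤ rm π (m-1)))) := by
    intro π hav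
    have hiff := asc_iff (n := m+2) (by omega) hav
    rw [show m+2-2 = m by omega, show m+2-1 = m+1 by omega, show m+2-3 = m-1 by omega,
      show ((m+2 = 2) = (m = 0)) from propext (by omega)] at hiff
    have hne : pf π (m+1) ≠ pf π m := fun he => by
      have := pf_inj π (show m+1 < m+2 by omega) (show m < m+2 by omega) he; omega
    rw [Fin.lt_def]
    simp only [← hpf1 π, ← hpf2 π]
    constructor
    · intro hd hcon
      have := hiff.mpr hcon
      omega
    · intro hcon
      rcases Nat.lt_trichotomy (pf π (m+1)) (pf π m) with h | h | h
      · exact h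
      · exact absurd h hne
      · exact absurd (hiff.mp h) hcon
  have hAscList : ∀ π : Equiv.Perm (Fin (m+2)),
      (AscP m (List.ofFn fun i : Fin (m+2) => rm π (i:ℕ)) ↔
        (rm π m = 0 ∧ (m = 0 ∨ 1 ≤ rm π (m-1)))) := by
    intro π
    unfold AscP
    rw [List.getD_eq_getElem _ _ (by simp), List.getD_eq_getElem _ _ (by simp; omega)]
    simp only [List.getElem_ofFn, Fin.val_mk]
  apply Finset.card_bij (i := fun π _ => List.ofFn fun i : Fin (m+2) => rm π (i:ℕ))
  · intro π hπ
    simp only [Finset.mem_filter, Finset.mem_univ, true_and] at hπ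
    obtain ⟨hocc, hdesc⟩ := hπ
    have hav := (occ123_zero_iff π).mp hocc
    rw [Finset.mem_filter]
    constructor
    · rw [mem_Wset_elem (by simp)]
      constructor
      · intro i j hi hj hij
        simp only [List.getElem_ofFn, Fin.val_mk]
        exact rm_anti π (le_of_lt hij)
      · intro i hi
        simp only [List.getElem_ofFn, Fin.val_mk]
        have := rm_bd π (show i < m+2 by omega)
        omega
    · rw [hAscList π]
      exact (hasc π hav).mp hdesc
  · intro π hπ σ hσ heq
    rw [List.ofFn_inj] at heq
    simp only [Finset.mem_filter, Finset.mem_univ, true_and] at hπ hσ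
    apply rm_injective ((occ123_zero_iff π).mp hπ.1) ((occ123_zero_iff σ).mp hσ.1)
    intro i hi
    have := congrFun heq ⟨i, hi⟩
    simpa using this
  · intro xs hxs
    rw [Finset.mem_filter] at hxs
    obtain ⟨hWm, hnasc⟩ := hxs
    have hlen : xs.length = m+2 := ((mem_Wset _ _ _).mp hWm).1
    rw [mem_Wset_elem hlen] at hWm
    obtain ⟨hpw, hbd'⟩ := hWm
    have hg : ∀ i (hi : i < m+2), xs.getD i 0 = xs[i]'(by omega) :=
      fun i hi => List.getD_eq_getElem _ _ (by omega)
    obtain ⟨π, hav, hrm⟩ := exists_perm (m+2) (by omega) (fun i => xs.getD i 0)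
      (fun i j hij hj => by
        rcases Nat.eq_or_lt_of_le hij with rfl | h
        · exact le_refl _
        · show xs.getD j 0 ≤ xs.getD i 0
          rw [hg i (by omega), hg j (by omega)]
          exact hpw i j (by omega) hj h)
      (fun i hi => by
        show xs.getD i 0 ≤ m + 2 - 1 - i
        rw [hg i hi]
        have := hbd' i hi
        omega)
    refine ⟨π, ?_, ?_⟩
    · simp only [Finset.mem_filter, Finset.mem_univ, true_and]
      refine ⟨(occ123_zero_iff π).mpr hav, ?_⟩
      rw [hasc π hav]
      intro hcon
      apply hnasc
      refine ⟨?_, ?_⟩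
      · rw [← hrm m (by omega)]
        exact hcon.1
      · rcases hcon.2 with h | h
        · exact Or.inl h
        · exact Or.inr (by rw [← hrm (m-1) (by omega)]; exact h)
    · apply List.ext_getElem (by simp [hlen])
      intro i hi1 hi2
      simp only [List.getElem_ofFn, Fin.val_mk]
      rw [hrm i (by omega), hg i (by omega)]

lemma count_final (m : ℕ) :
    (Finset.univ.filter (fun π : Equiv.Perm (Fin (m+2)) =>
        occ123 π = 0 ∧ π ⟨m+1, by omega⟩ < π ⟨m, by omega⟩)).card + wfun (m+1) m
      = wfun (m+2) (m+1) := by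
  rw [main_bij, ← card_asc m, ← card_Wset]
  rw [add_comm]
  exact Finset.card_filter_add_card_filter_not (AscP m)



/-- The number of 123-avoiding permutations of length `n ≥ 2` ending with a
descent is `(3/(n+1)) * C(2n-2, n)`. -/
theorem avoid123_descent_count_formula (n : ℕ) (hn : 2 ≤ n) :
    ({π : Equiv.Perm (Fin n) | occ123 π = 0 ∧
        π ⟨n - 1, by omega⟩ < π ⟨n - 2, by omega⟩}.ncard : ℚ)
      = (3 / (n + 1 : ℚ)) * (Nat.choose (2 * n - 2) n) := by
  obtain ⟨m, rfl⟩ : ∃ m, n = m + 2 := ⟨n - 2, by omega⟩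
  have hset : {π : Equiv.Perm (Fin (m+2)) | occ123 π = 0 ∧
        π ⟨m+2-1, by omega⟩ < π ⟨m+2-2, by omega⟩}
      = ↑(Finset.univ.filter (fun π : Equiv.Perm (Fin (m+2)) =>
        occ123 π = 0 ∧ π ⟨m+1, by omega⟩ < π ⟨m, by omega⟩)) := by
    ext π
    simp only [Set.mem_setOf_eq, Finset.coe_filter, Finset.mem_univ, true_and]
    exact Iff.rfl
  rw [hset, Set.ncard_coe_finset]
  set cardS := (Finset.univ.filter (fun π : Equiv.Perm (Fin (m+2)) =>
        occ123 π = 0 ∧ π ⟨m+1, by omega⟩ < π ⟨m, by omega⟩)).card with hcardS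
  have hsum := count_final m
  rw [← hcardS] at hsum
  have h1 := wfun_closed (m+2) (m+1) (by omega)
  have h2 := wfun_closed (m+1) m (by omega)
  rw [show m+2+1-(m+1) = 2 by omega, show m+2+(m+1) = 2*m+3 by ring] at h1
  rw [show m+1+1-m = 2 by omega, show m+1+m = 2*m+1 by ring] at h2
  have e0 : (cardS : ℚ) + (wfun (m+1) m : ℚ) = (wfun (m+2) (m+1) : ℚ) := by
    exact_mod_cast congrArg (fun x : ℕ => (x : ℚ)) hsum
  have e1 : ((m:ℚ)+3) * (wfun (m+2) (m+1) : ℚ) = 2 * ((2*m+3).choose (m+1) : ℚ) := by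
    exact_mod_cast congrArg (fun x : ℕ => (x : ℚ)) h1
  have e2 : ((m:ℚ)+2) * (wfun (m+1) m : ℚ) = 2 * ((2*m+1).choose m : ℚ) := by
    exact_mod_cast congrArg (fun x : ℕ => (x : ℚ)) h2
  have hc1 : ((2*m+3).choose (m+1) : ℚ) = ((2*m+3).factorial) / (((m+1).factorial) * ((m+2).factorial)) := by
    rw [Nat.cast_choose ℚ (by omega : m+1 ≤ 2*m+3), show 2*m+3-(m+1) = m+2 by omega]
  have hc2 : ((2*m+1).choose m : ℚ) = ((2*m+1).factorial) / ((m.factorial) * ((m+1).factorial)) := by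
    rw [Nat.cast_choose ℚ (by omega : m ≤ 2*m+1), show 2*m+1-m = m+1 by omega]
  have hc3 : ((2*m+2).choose (m+2) : ℚ) = ((2*m+2).factorial) / (((m+2).factorial) * (m.factorial)) := by
    rw [Nat.cast_choose ℚ (by omega : m+2 ≤ 2*m+2), show 2*m+2-(m+2) = m by omega]
  have f1 : (((2*m+3).factorial) : ℚ) = (2*(m:ℚ)+3) * ((2*m+2) * (((2*m+1).factorial) : ℚ)) := by
    rw [show 2*m+3 = (2*m+2)+1 by ring, Nat.factorial_succ,
      show 2*m+2 = (2*m+1)+1 by ring, Nat.factorial_succ]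
    push_cast
    ring
  have f4 : (((2*m+2).factorial) : ℚ) = (2*(m:ℚ)+2) * (((2*m+1).factorial) : ℚ) := by
    rw [show 2*m+2 = (2*m+1)+1 by ring, Nat.factorial_succ]
    push_cast
    ring
  have f2 : (((m+2).factorial) : ℚ) = ((m:ℚ)+2) * (((m:ℚ)+1) * ((m.factorial) : ℚ)) := by
    rw [show m+2 = (m+1)+1 by ring, Nat.factorial_succ, Nat.factorial_succ]
    push_cast
    ring
  have f3 : (((m+1).factorial) : ℚ) = ((m:ℚ)+1) * ((m.factorial) : ℚ) := by
    rw [Nat.factorial_succ]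
    push_cast
    ring
  have hfm : ((m.factorial) : ℚ) ≠ 0 := by positivity
  have hf21 : (((2*m+1).factorial) : ℚ) ≠ 0 := by positivity
  have main : ((m:ℚ)+3) * (((m:ℚ)+2) * (cardS : ℚ))
      = 3 * (((m:ℚ)+2) * ((2*m+2).choose (m+2) : ℚ)) := by
    have step : ((m:ℚ)+3) * (((m:ℚ)+2) * (cardS : ℚ))
        = ((m:ℚ)+2) * (2 * ((2*m+3).choose (m+1) : ℚ))
          - ((m:ℚ)+3) * (2 * ((2*m+1).choose m : ℚ)) := by
      rw [← e1, ← e2, ← e0]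
      ring
    rw [step, hc1, hc2, hc3, f1, f4, f2, f3]
    field_simp
    ring
  have hm3 : ((m:ℚ)+3) ≠ 0 := by positivity
  have hm2 : ((m:ℚ)+2) ≠ 0 := by positivity
  rw [show 2*(m+2)-2 = 2*m+2 by omega]
  push_cast
  rw [div_mul_eq_mul_div, eq_div_iff (by positivity : ((m:ℚ)+2+1) ≠ 0)]
  have main2 : ((m:ℚ)+2) * ((cardS:ℚ) * ((m:ℚ)+2+1))
      = ((m:ℚ)+2) * (3 * (((2*m+2).choose (m+2)) : ℚ)) := by
    linear_combination main
  exact mul_left_cancel₀ hm2 main2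
end

section
/- For n ≥ 3, the sum over i from 2 to n−1 of (C_{n−i+1} − C_{n−i})(C_i − C_{i−1}) equals (6/(n+3)) * C(2n-1, n+2), where C_m is the m-th Catalan number. -/
open Finset

private lemma catalan_conv (k : ℕ) :
    catalan (k + 1) = ∑ i ∈ range (k + 1), catalan i * catalan (k - i) := by
  rw [catalan_succ, Finset.sum_range]

private lemma convD (m : ℕ) :
    ∑ j ∈ range (m + 1), catalan (j + 1) * catalan (m + 1 - j) + 2 * catalan (m + 2)
      = catalan (m + 3) := by
  have h := catalan_conv (m + 2)
  rw [Finset.sum_range_succ, Finset.sum_range_succ'] at h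
  simp only [Nat.add_sub_cancel_left, Nat.succ_sub_succ, Nat.sub_self, Nat.sub_zero, Nat.zero_add,
    catalan_zero, catalan_one, one_mul, mul_one] at h
  rw [show (m+3) = (m+2+1) from rfl, h]
  ring

private lemma convB (m : ℕ) :
    ∑ j ∈ range (m + 1), catalan (j + 1) * catalan (m + 2 - j)
      + (2 * catalan (m + 3) + catalan (m + 2)) = catalan (m + 4) := by
  have h := catalan_conv (m + 3)
  rw [Finset.sum_range_succ, Finset.sum_range_succ, Finset.sum_range_succ'] at h
  simp only [Nat.add_sub_cancel_left, Nat.succ_sub_succ, Nat.sub_self, Nat.sub_zero, Nat.zero_add,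
    catalan_zero, catalan_one, one_mul, mul_one,
    show m + 2 - (m + 1) = 1 by omega] at h
  rw [show (m+4) = (m+3+1) from rfl, h]
  ring

private lemma convC (m : ℕ) :
    ∑ j ∈ range (m + 1), catalan (j + 1 + 1) * catalan (m + 1 - j)
      + (2 * catalan (m + 3) + catalan (m + 2)) = catalan (m + 4) := by
  have h := catalan_conv (m + 3)
  rw [Finset.sum_range_succ, Finset.sum_range_succ', Finset.sum_range_succ'] at h
  simp only [Nat.add_sub_cancel_left, Nat.succ_sub_succ, Nat.sub_self, Nat.sub_zero, Nat.zero_add,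
    catalan_zero, catalan_one, one_mul, mul_one,
    show m + 2 - (m + 1) = 1 by omega] at h
  rw [show (m+4) = (m+3+1) from rfl, h]
  ring

private lemma convA (m : ℕ) :
    ∑ j ∈ range (m + 1), catalan (j + 1 + 1) * catalan (m + 2 - j)
      + (2 * catalan (m + 4) + 2 * catalan (m + 3)) = catalan (m + 5) := by
  have h := catalan_conv (m + 4)
  rw [Finset.sum_range_succ, Finset.sum_range_succ, Finset.sum_range_succ',
    Finset.sum_range_succ'] at h
  simp only [Nat.add_sub_cancel_left, Nat.succ_sub_succ, Nat.sub_self, Nat.sub_zero, Nat.zero_add,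
    catalan_zero, catalan_one, one_mul, mul_one,
    show m + 3 - (m + 1) = 2 by omega, show m + 2 - (m + 1) = 1 by omega,
    show m + 3 - (m + 2) = 1 by omega] at h
  rw [show (m+5) = (m+4+1) from rfl, h]
  ring

private lemma choose_half (m : ℕ) :
    2 * Nat.choose (2 * m + 5) (m + 3) = Nat.centralBinom (m + 3) := by
  have sym : Nat.choose (2 * m + 5) (m + 2) = Nat.choose (2 * m + 5) (m + 3) := by
    have h := Nat.choose_symm (n := 2 * m + 5) (k := m + 2) (by omega)
    rw [show 2 * m + 5 - (m + 2) = m + 3 by omega] at h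
    exact h.symm
  have pas : Nat.choose (2 * m + 5 + 1) (m + 2 + 1)
      = Nat.choose (2 * m + 5) (m + 2) + Nat.choose (2 * m + 5) (m + 3) :=
    Nat.choose_succ_succ _ _
  unfold Nat.centralBinom
  rw [show 2 * (m + 3) = 2 * m + 5 + 1 by omega, show m + 3 = m + 2 + 1 from rfl, pas, sym]
  ring

private lemma closed_form (m : ℕ) :
    ((m : ℚ) + 6) * ((catalan (m + 5) : ℚ) - 4 * catalan (m + 4) + 3 * catalan (m + 3))
      = 6 * (Nat.choose (2 * m + 5) (m + 5) : ℚ) := by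
  have f1 : ((m : ℚ) + 4) * catalan (m + 3) = (Nat.centralBinom (m + 3) : ℚ) := by
    have h := congrArg (fun x : ℕ => (x : ℚ)) (succ_mul_catalan_eq_centralBinom (m + 3))
    push_cast at h; linarith
  have f2 : ((m : ℚ) + 5) * catalan (m + 4) = (Nat.centralBinom (m + 4) : ℚ) := by
    have h := congrArg (fun x : ℕ => (x : ℚ)) (succ_mul_catalan_eq_centralBinom (m + 4))
    push_cast at h; linarith
  have f3 : ((m : ℚ) + 6) * catalan (m + 5) = (Nat.centralBinom (m + 5) : ℚ) := by
    have h := congrArg (fun x : ℕ => (x : ℚ)) (succ_mul_catalan_eq_centralBinom (m + 5))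
    push_cast at h; linarith
  have g1 : ((m : ℚ) + 4) * (Nat.centralBinom (m + 4) : ℚ)
      = (4 * (m : ℚ) + 14) * (Nat.centralBinom (m + 3) : ℚ) := by
    have h := congrArg (fun x : ℕ => (x : ℚ)) (Nat.succ_mul_centralBinom_succ (m + 3))
    push_cast at h; linarith
  have g2 : ((m : ℚ) + 5) * (Nat.centralBinom (m + 5) : ℚ)
      = (4 * (m : ℚ) + 18) * (Nat.centralBinom (m + 4) : ℚ) := by
    have h := congrArg (fun x : ℕ => (x : ℚ)) (Nat.succ_mul_centralBinom_succ (m + 4))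
    push_cast at h; linarith
  have h1 : 2 * (Nat.choose (2 * m + 5) (m + 3) : ℚ) = (Nat.centralBinom (m + 3) : ℚ) := by
    have h := congrArg (fun x : ℕ => (x : ℚ)) (choose_half m)
    push_cast at h; linarith
  have h2 : ((m : ℚ) + 4) * (Nat.choose (2 * m + 5) (m + 4) : ℚ)
      = ((m : ℚ) + 2) * (Nat.choose (2 * m + 5) (m + 3) : ℚ) := by
    have h := Nat.choose_succ_right_eq (2 * m + 5) (m + 3)
    rw [show 2 * m + 5 - (m + 3) = m + 2 by omega] at h
    have h' := congrArg (fun x : ℕ => (x : ℚ)) h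
    push_cast at h'; linarith
  have h3 : ((m : ℚ) + 5) * (Nat.choose (2 * m + 5) (m + 5) : ℚ)
      = ((m : ℚ) + 1) * (Nat.choose (2 * m + 5) (m + 4) : ℚ) := by
    have h := Nat.choose_succ_right_eq (2 * m + 5) (m + 4)
    rw [show 2 * m + 5 - (m + 4) = m + 1 by omega] at h
    have h' := congrArg (fun x : ℕ => (x : ℚ)) h
    push_cast at h'; linarith
  have E4 : ((m : ℚ) + 4) * ((m : ℚ) + 5) * catalan (m + 4)
      = (4 * (m : ℚ) + 14) * (Nat.centralBinom (m + 3) : ℚ) := by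
    linear_combination ((m : ℚ) + 4) * f2 + g1
  have E5 : ((m : ℚ) + 4) * ((m : ℚ) + 5) * (((m : ℚ) + 6) * catalan (m + 5))
      = (4 * (m : ℚ) + 18) * (4 * (m : ℚ) + 14) * (Nat.centralBinom (m + 3) : ℚ) := by
    linear_combination ((m : ℚ) + 4) * ((m : ℚ) + 5) * f3 + ((m : ℚ) + 4) * g2
      + (4 * (m : ℚ) + 18) * g1
  have E8 : 2 * (((m : ℚ) + 4) * ((m : ℚ) + 5)) * (Nat.choose (2 * m + 5) (m + 5) : ℚ)
      = ((m : ℚ) + 1) * ((m : ℚ) + 2) * (Nat.centralBinom (m + 3) : ℚ) := by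
    linear_combination 2 * ((m : ℚ) + 4) * h3 + 2 * ((m : ℚ) + 1) * h2
      + ((m : ℚ) + 1) * ((m : ℚ) + 2) * h1
  have h45 : ((m : ℚ) + 4) * ((m : ℚ) + 5) ≠ 0 := by positivity
  apply mul_left_cancel₀ h45
  linear_combination E5 - 4 * ((m : ℚ) + 6) * E4 + 3 * (((m : ℚ) + 5) * ((m : ℚ) + 6)) * f1
    - 3 * E8

/-- For `n ≥ 3`, `∑_{i=2}^{n-1} (C_{n-i+1} - C_{n-i})(C_i - C_{i-1})
= (6/(n+3)) * C(2n-1, n+2)`. -/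
theorem catalan_diff_sum_eq (n : ℕ) (hn : 3 ≤ n) :
    (∑ i ∈ Finset.Icc 2 (n - 1),
        ((catalan (n - i + 1) : ℚ) - catalan (n - i)) *
          ((catalan i : ℚ) - catalan (i - 1)))
      = (6 / (n + 3 : ℚ)) * (Nat.choose (2 * n - 1) (n + 2)) := by
  obtain ⟨m, rfl⟩ : ∃ m, n = m + 3 := ⟨n - 3, by omega⟩
  rw [show m + 3 - 1 = m + 2 from rfl, show 2 * (m + 3) - 1 = 2 * m + 5 by omega,
    show m + 3 + 2 = m + 5 from rfl, ← Finset.Ico_add_one_right_eq_Icc, Finset.sum_Ico_eq_sum_range,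
    show m + 2 + 1 - 2 = m + 1 from rfl]
  have key : ∀ j ∈ range (m + 1),
      ((catalan (m + 3 - (2 + j) + 1) : ℚ) - catalan (m + 3 - (2 + j))) *
          ((catalan (2 + j) : ℚ) - catalan (2 + j - 1))
        = ((catalan (j + 1 + 1) * catalan (m + 2 - j) : ℕ) : ℚ)
          - ((catalan (j + 1) * catalan (m + 2 - j) : ℕ) : ℚ)
          - ((catalan (j + 1 + 1) * catalan (m + 1 - j) : ℕ) : ℚ)
          + ((catalan (j + 1) * catalan (m + 1 - j) : ℕ) : ℚ) := by
    intro j hj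
    have hjm : j ≤ m := by simpa [Nat.lt_succ_iff] using hj
    rw [show m + 3 - (2 + j) = m + 1 - j by omega,
      show m + 1 - j + 1 = m + 2 - j by omega,
      show 2 + j - 1 = j + 1 by omega, show 2 + j = j + 1 + 1 by omega]
    push_cast
    ring
  rw [Finset.sum_congr rfl key]
  have qA : ∑ j ∈ range (m + 1), ((catalan (j + 1 + 1) * catalan (m + 2 - j) : ℕ) : ℚ)
      = (catalan (m + 5) : ℚ) - 2 * catalan (m + 4) - 2 * catalan (m + 3) := by
    have h := congrArg (fun x : ℕ => (x : ℚ)) (convA m)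
    push_cast at h; push_cast; linarith
  have qB : ∑ j ∈ range (m + 1), ((catalan (j + 1) * catalan (m + 2 - j) : ℕ) : ℚ)
      = (catalan (m + 4) : ℚ) - 2 * catalan (m + 3) - catalan (m + 2) := by
    have h := congrArg (fun x : ℕ => (x : ℚ)) (convB m)
    push_cast at h; push_cast; linarith
  have qC : ∑ j ∈ range (m + 1), ((catalan (j + 1 + 1) * catalan (m + 1 - j) : ℕ) : ℚ)
      = (catalan (m + 4) : ℚ) - 2 * catalan (m + 3) - catalan (m + 2) := by
    have h := congrArg (fun x : ℕ => (x : ℚ)) (convC m)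
    push_cast at h; push_cast; linarith
  have qD : ∑ j ∈ range (m + 1), ((catalan (j + 1) * catalan (m + 1 - j) : ℕ) : ℚ)
      = (catalan (m + 3) : ℚ) - 2 * catalan (m + 2) := by
    have h := congrArg (fun x : ℕ => (x : ℚ)) (convD m)
    push_cast at h; push_cast; linarith
  have hsplit : (∑ j ∈ range (m + 1),
      (((catalan (j + 1 + 1) * catalan (m + 2 - j) : ℕ) : ℚ)
        - ((catalan (j + 1) * catalan (m + 2 - j) : ℕ) : ℚ)
        - ((catalan (j + 1 + 1) * catalan (m + 1 - j) : ℕ) : ℚ)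
        + ((catalan (j + 1) * catalan (m + 1 - j) : ℕ) : ℚ)))
      = (catalan (m + 5) : ℚ) - 4 * catalan (m + 4) + 3 * catalan (m + 3) := by
    rw [Finset.sum_add_distrib, Finset.sum_sub_distrib, Finset.sum_sub_distrib, qA, qB, qC, qD]
    ring
  rw [hsplit]
  have h6 : ((m : ℚ) + 6) ≠ 0 := by positivity
  push_cast
  rw [show ((m : ℚ) + 3 + 3) = (m : ℚ) + 6 by ring, div_mul_eq_mul_div, eq_div_iff h6]
  linear_combination closed_form m
end
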